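/- arXiv:1904.02368 — 7 statements merged into one kernel-verified Lean document; each statement's English description precedes it below -/
import Mathlib

section
/- Let Γ = [q; r_1,…,r_m; α] be a blockchain oceanic game with quota q = 1/2, major-miner weights r_1,…,r_m ≥ 0 and ocean mass α > 0 such that Σ_{j=1}^m r_j < 1/2 ≤ α. Then for every major miner i ∈ {1,…,m}, the value φ_i satisfies φ_i = (r_i/α^m) · Σ_{S ⊆ {1,…,m}\{i}} [ c_{|S|} · (∏_{j∈S} r_j) · (∏_{k∈{1,…,m}\({i}∪S)} (α − r_k)) ], where for a nonnegative integer s the coefficient c_s is defined by c_s := s! · Σ_{k=0}^{s} (−1)^k/(s−k)!. -/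
open MeasureTheory Finset

/-- The uniform probability measure on the unit cube `[0,1]^m`. -/
noncomputable def cubeMeasure (m : ℕ) : Measure (Fin m → ℝ) :=
  Measure.pi fun _ => volume.restrict (Set.Icc (0:ℝ) 1)

/-- The event that miner `i` is pivotal: with `r(x) = ∑_j r_j · 1{X_j < X_i}`,
`r(X_i) + α·X_i < q ≤ r(X_i) + α·X_i + r_i`. -/
def pivotEvent (m : ℕ) (q α : ℝ) (r : Fin m → ℝ) (i : Fin m) : Set (Fin m → ℝ) :=
  {x | (∑ j, if x j < x i then r j else 0) + α * x i < q ∧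
       q ≤ (∑ j, if x j < x i then r j else 0) + α * x i + r i}

/-- The value `φ_i` of major miner `i` in the blockchain oceanic game
`Γ = [q; r_1,…,r_m; α]`. -/
noncomputable def minerValue (m : ℕ) (q α : ℝ) (r : Fin m → ℝ) (i : Fin m) : ℝ :=
  (cubeMeasure m (pivotEvent m q α r i)).toReal

/-- The oceanic value `Φ = 1 - ∑_i φ_i`. -/
noncomputable def oceanicValue (m : ℕ) (q α : ℝ) (r : Fin m → ℝ) : ℝ :=
  1 - ∑ i, minerValue m q α r i

/-- The coefficient `c_s = s! · ∑_{k=0}^s (-1)^k/(s-k)!`. -/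
noncomputable def oceanicCoeff (s : ℕ) : ℝ :=
  (s.factorial : ℝ) * ∑ k ∈ Finset.range (s + 1), (-1 : ℝ) ^ k / ((s - k).factorial : ℝ)

/-!
Condition on the arrival time `t = X_i` and on the set `S` of major miners arriving before `i`:
miner `i` is pivotal exactly when `α t ∈ [q - r_i - r(S), q - r(S))`, and because
`∑ r_j ≤ q ≤ α` these intervals lie in `[0, 1]`. Hence `φ_i` is a sum over `S` of integrals of
`t^|S| (1 - t)^(m - 1 - |S|)` over intervals of the same length `r_i / α`. Translating them all to
`[(q - r_i)/α, q/α]` and expanding `(1 - t)^k`, the integrand regroups, for each `U ⊇ S`, into a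
top-order finite difference of `y ↦ y^|U|` with steps `-r_j / α`, which is the constant
`|U|! ∏_{j ∈ U} (-r_j / α)`. So `φ_i = (r_i / α) ∑_U |U|! ∏_{j ∈ U} (-r_j / α)`, whatever `q` is.
The stated form follows from `c_s = ∑_{V ⊆ S} (-1)^|V| |V|!` and `α = r_j + (α - r_j)`.
-/

theorem Finset.sum_powerset_sum_powerset_sdiff {ι M : Type*} [DecidableEq ι] [AddCommMonoid M]
    (A : Finset ι) (F : Finset ι → Finset ι → M) :
    ∑ S ∈ A.powerset, ∑ T ∈ (A \ S).powerset, F S T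
      = ∑ U ∈ A.powerset, ∑ S ∈ U.powerset, F S (U \ S) := by
  rw [Finset.sum_sigma', Finset.sum_sigma']
  refine Finset.sum_nbij' (fun p => ⟨p.1 ∪ p.2, p.1⟩) (fun p => ⟨p.2, p.1 \ p.2⟩)
    ?_ ?_ ?_ ?_ ?_ <;> rintro ⟨S, T⟩ h <;>
    simp only [Finset.mem_sigma, Finset.mem_powerset] at h ⊢
  · exact ⟨Finset.union_subset h.1 (h.2.trans Finset.sdiff_subset), Finset.subset_union_left⟩
  · exact ⟨h.2.trans h.1, Finset.sdiff_subset_sdiff h.1 le_rfl⟩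
  · have : Disjoint S T := Finset.disjoint_of_subset_right h.2 Finset.disjoint_sdiff
    simp [Finset.union_sdiff_cancel_left this]
  · simp [Finset.union_sdiff_of_subset h.2]
  · have : Disjoint S T := Finset.disjoint_of_subset_right h.2 Finset.disjoint_sdiff
    rw [Finset.union_sdiff_cancel_left this]

section FiniteDifference

open Polynomial

variable {R : Type*} [CommRing R]

theorem natDegree_taylor_sub_le {g : R[X]} {n : ℕ} (hg : g.natDegree ≤ n + 1) (c : R) :
    (taylor c g - g).natDegree ≤ n := by
  refine natDegree_le_iff_coeff_eq_zero.mpr fun k hk => ?_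
  have hconst : (hasseDeriv k g).natDegree = 0 :=
    Nat.eq_zero_of_le_zero ((natDegree_hasseDeriv_le g k).trans (by omega))
  rw [coeff_sub, taylor_coeff, eq_C_of_natDegree_eq_zero hconst, eval_C, hasseDeriv_coeff]
  simp

theorem coeff_taylor_sub {g : R[X]} {n : ℕ} (hg : g.natDegree ≤ n + 1) (c : R) :
    (taylor c g - g).coeff n = (n + 1) * g.coeff (n + 1) * c := by
  have hlin : (hasseDeriv n g).natDegree ≤ 1 := (natDegree_hasseDeriv_le g n).trans (by omega)
  rw [coeff_sub, taylor_coeff, eq_X_add_C_of_natDegree_le_one hlin]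
  simp [hasseDeriv_coeff, add_comm 1 n]

theorem sum_powerset_neg_one_pow_mul_eval {ι : Type*} [DecidableEq ι] (x : ι → R)
    (U : Finset ι) (g : R[X]) (hg : g.natDegree ≤ U.card) :
    ∑ S ∈ U.powerset, (-1) ^ (U \ S).card * g.eval (∑ j ∈ S, x j)
      = g.coeff U.card * U.card.factorial * ∏ j ∈ U, x j := by
  induction U using Finset.induction generalizing g with
  | empty =>
    rw [eq_C_of_natDegree_le_zero hg]
    simp
  | @insert a U ha ih =>
    rw [Finset.card_insert_of_notMem ha] at hg ⊢
    -- the terms for `S` and `insert a S` combine into the difference `g (· + x a) - g`,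
    -- which has degree one less
    have hpair : ∀ S ∈ U.powerset,
        (-1) ^ (insert a U \ S).card * g.eval (∑ j ∈ S, x j)
          + (-1) ^ (insert a U \ insert a S).card * g.eval (∑ j ∈ insert a S, x j)
        = (-1) ^ (U \ S).card * (taylor (x a) g - g).eval (∑ j ∈ S, x j) := by
      intro S hS
      have haS : a ∉ S := fun h => ha (Finset.mem_powerset.mp hS h)
      rw [Finset.insert_sdiff_of_notMem _ haS, Finset.insert_sdiff_insert,
        Finset.sdiff_insert_of_notMem ha, Finset.card_insert_of_notMem
          (fun h => ha (Finset.mem_sdiff.mp h).1), Finset.sum_insert haS]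
      simp only [eval_sub, taylor_eval, add_comm _ (x a)]
      ring
    rw [Finset.sum_powerset_insert ha, ← Finset.sum_add_distrib, Finset.sum_congr rfl hpair,
      ih _ (natDegree_taylor_sub_le hg _), coeff_taylor_sub hg, Finset.prod_insert ha,
      Nat.factorial_succ]
    push_cast
    ring

theorem sum_powerset_pow_mul_one_sub_pow {ι : Type*} [DecidableEq ι] (A : Finset ι)
    (x : ι → R) (y : R) :
    ∑ S ∈ A.powerset, (y + ∑ j ∈ S, x j) ^ S.card * (1 - (y + ∑ j ∈ S, x j)) ^ (A \ S).card
      = ∑ U ∈ A.powerset, (U.card.factorial : R) * ∏ j ∈ U, x j := by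
  have hexpand : ∀ (t : R) (S : Finset ι), t ^ S.card * (1 - t) ^ (A \ S).card
      = ∑ T ∈ (A \ S).powerset, (-1) ^ T.card * t ^ (S.card + T.card) := by
    intro t S
    rw [sub_eq_add_neg, ← Finset.prod_const (s := A \ S), Finset.prod_one_add, Finset.mul_sum]
    refine Finset.sum_congr rfl fun T _ => ?_
    rw [Finset.prod_const, neg_pow, pow_add]
    ring
  simp only [hexpand]
  rw [Finset.sum_powerset_sum_powerset_sdiff]
  refine Finset.sum_congr rfl fun U _ => ?_
  have hdeg : ((X + C y) ^ U.card).natDegree ≤ U.card := by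
    simpa using natDegree_pow_le_of_le U.card ((natDegree_add_le X (C y)).trans
      (max_le natDegree_X_le ((natDegree_C y).trans_le zero_le_one)))
  have heval : ∀ S ∈ U.powerset,
      (-1) ^ (U \ S).card * (y + ∑ j ∈ S, x j) ^ (S.card + (U \ S).card)
      = (-1) ^ (U \ S).card * ((X + C y) ^ U.card).eval (∑ j ∈ S, x j) := by
    intro S hS
    rw [add_comm S.card, Finset.card_sdiff_add_card_eq_card (Finset.mem_powerset.mp hS)]
    simp [add_comm y]
  rw [Finset.sum_congr rfl heval, sum_powerset_neg_one_pow_mul_eval x U _ hdeg,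
    coeff_X_add_C_pow]
  simp

end FiniteDifference

theorem oceanicCoeff_card_eq_sum_powerset {ι : Type*} (S : Finset ι) :
    oceanicCoeff S.card = ∑ V ∈ S.powerset, (-1) ^ V.card * (V.card.factorial : ℝ) := by
  rw [Finset.sum_powerset_apply_card (fun k => (-1 : ℝ) ^ k * (k.factorial : ℝ)), oceanicCoeff,
    Finset.mul_sum]
  refine Finset.sum_congr rfl fun k hk => ?_
  have hks : k ≤ S.card := Nat.lt_succ_iff.mp (Finset.mem_range.mp hk)
  have hfac := Nat.choose_mul_factorial_mul_factorial hks
  rw [nsmul_eq_mul, ← hfac]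
  push_cast
  field_simp

theorem sum_oceanicCoeff_mul_prod {ι : Type*} [DecidableEq ι] (A : Finset ι) (r : ι → ℝ)
    (α : ℝ) :
    ∑ S ∈ A.powerset, oceanicCoeff S.card * (∏ j ∈ S, r j) * ∏ k ∈ A \ S, (α - r k)
      = ∑ V ∈ A.powerset, (V.card.factorial : ℝ) * (∏ j ∈ V, -r j) * α ^ (A \ V).card := by
  have hexpand : ∀ V : Finset ι, α ^ (A \ V).card = ∑ W ∈ (A \ V).powerset,
      (∏ j ∈ W, r j) * ∏ k ∈ (A \ V) \ W, (α - r k) := by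
    intro V
    rw [← Finset.prod_add, ← Finset.prod_const]
    simp
  simp only [hexpand, Finset.mul_sum]
  rw [Finset.sum_powerset_sum_powerset_sdiff]
  refine Finset.sum_congr rfl fun U hU => ?_
  rw [oceanicCoeff_card_eq_sum_powerset, Finset.sum_mul, Finset.sum_mul]
  refine Finset.sum_congr rfl fun V hV => ?_
  have hVU := Finset.mem_powerset.mp hV
  rw [sdiff_sdiff_sdiff_cancel_right hVU, ← Finset.prod_sdiff hVU, Finset.prod_neg]
  ring

theorem sum_integral_pow_mul_one_sub_pow {ι : Type*} [DecidableEq ι] (A : Finset ι)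
    (r : ι → ℝ) (q ρ α : ℝ) :
    ∑ S ∈ A.powerset, ∫ t in (q - ρ - ∑ j ∈ S, r j) / α..(q - ∑ j ∈ S, r j) / α,
        t ^ S.card * (1 - t) ^ (A \ S).card
      = ρ / α * ∑ U ∈ A.powerset, (U.card.factorial : ℝ) * ∏ j ∈ U, -r j / α := by
  have hshift : ∀ S ∈ A.powerset,
      ∫ t in (q - ρ - ∑ j ∈ S, r j) / α..(q - ∑ j ∈ S, r j) / α,
        t ^ S.card * (1 - t) ^ (A \ S).card
      = ∫ y in (q - ρ) / α..q / α, (y + ∑ j ∈ S, -r j / α) ^ S.card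
          * (1 - (y + ∑ j ∈ S, -r j / α)) ^ (A \ S).card := by
    intro S _
    rw [intervalIntegral.integral_comp_add_right (fun t => t ^ S.card * (1 - t) ^ (A \ S).card),
      ← Finset.sum_div, Finset.sum_neg_distrib]
    congr 1 <;> ring
  rw [Finset.sum_congr rfl hshift, ← intervalIntegral.integral_finsetSum
    fun S _ => by apply Continuous.intervalIntegrable; fun_prop]
  simp only [sum_powerset_pow_mul_one_sub_pow, intervalIntegral.integral_const, smul_eq_mul]
  ring

section Probability

open Set

noncomputable def arrivedBefore {m : ℕ} (x : Fin m → ℝ) (i : Fin m) : Finset (Fin m) :=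
  {j | x j < x i}

theorem arrivedBefore_eq_iff {m : ℕ} (x : Fin m → ℝ) (i : Fin m) (S : Finset (Fin m)) :
    arrivedBefore x i = S ↔ ∀ j, (x j < x i ↔ j ∈ S) := by
  simp [arrivedBefore, Finset.ext_iff]

theorem measurableSet_arrivedBefore_eq {m : ℕ} (i : Fin m) (S : Finset (Fin m)) {T : Set ℝ}
    (hT : MeasurableSet T) : MeasurableSet {x : Fin m → ℝ | arrivedBefore x i = S ∧ x i ∈ T} := by
  simp only [arrivedBefore_eq_iff, ofPred_and, ofPred_forall]
  refine .inter (.iInter fun j => ?_) (measurable_pi_apply i hT)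
  by_cases hj : j ∈ S
  · simpa [hj] using measurableSet_lt (measurable_pi_apply j) (measurable_pi_apply i)
  · simpa [hj] using measurableSet_le (measurable_pi_apply i) (measurable_pi_apply j)

theorem volume_restrict_Icc_zero_one_Iio {t : ℝ} (ht : t ∈ Icc (0 : ℝ) 1) :
    volume.restrict (Icc (0 : ℝ) 1) (Iio t) = ENNReal.ofReal t := by
  have : Iio t ∩ Icc 0 1 = Ico 0 t := by
    ext u
    simp only [mem_inter_iff, Set.mem_Iio, Set.mem_Icc, Set.mem_Ico]
    exact ⟨fun h => ⟨h.2.1, h.1⟩, fun h => ⟨h.2, h.1, h.2.le.trans ht.2⟩⟩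
  rw [Measure.restrict_apply measurableSet_Iio, this, Real.volume_Ico, sub_zero]

theorem volume_restrict_Icc_zero_one_Ici {t : ℝ} (ht : t ∈ Icc (0 : ℝ) 1) :
    volume.restrict (Icc (0 : ℝ) 1) (Ici t) = ENNReal.ofReal (1 - t) := by
  have : Ici t ∩ Icc 0 1 = Icc t 1 := by
    ext u
    simp only [mem_inter_iff, Set.mem_Ici, Set.mem_Icc]
    exact ⟨fun h => ⟨h.1, h.2.2⟩, fun h => ⟨h.1, ht.1.trans h.1, h.2⟩⟩
  rw [Measure.restrict_apply measurableSet_Ici, this, Real.volume_Icc]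

theorem arrivedBefore_insertNth_eq_iff {n : ℕ} {i : Fin (n + 1)} {S : Finset (Fin (n + 1))}
    (hiS : i ∉ S) (t : ℝ) (y : Fin n → ℝ) :
    arrivedBefore (i.insertNth t y) i = S
      ↔ y ∈ Set.pi univ fun j => if i.succAbove j ∈ S then Iio t else Ici t := by
  simp only [arrivedBefore_eq_iff, Fin.forall_iff_succAbove i, Fin.insertNth_apply_same,
    Fin.insertNth_apply_succAbove, lt_self_iff_false, hiS, iff_self, true_and, mem_pi,
    mem_univ, forall_const]
  refine forall_congr' fun j => ?_
  by_cases hj : i.succAbove j ∈ S <;> simp [hj]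

theorem prod_succAbove_ite_eq_pow_mul_pow {n : ℕ} {i : Fin (n + 1)} {S : Finset (Fin (n + 1))}
    (hiS : i ∉ S) (a b : ℝ) :
    ∏ j : Fin n, (if i.succAbove j ∈ S then a else b)
      = a ^ S.card * b ^ ((Finset.univ.erase i) \ S).card := by
  have herase : (Finset.univ : Finset (Fin (n + 1))).erase i
      = Finset.univ.map (Fin.succAboveEmb i) := by
    rw [Fin.univ_succAbove n i, Finset.erase_cons]
  have hSA : S ⊆ Finset.univ.erase i := fun k hk =>
    Finset.mem_erase.mpr ⟨fun h => hiS (h ▸ hk), Finset.mem_univ k⟩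
  calc ∏ j : Fin n, (if i.succAbove j ∈ S then a else b)
      = ∏ k ∈ Finset.univ.erase i, (if k ∈ S then a else b) := by
        rw [herase, Finset.prod_map]
        rfl
    _ = a ^ S.card * b ^ ((Finset.univ.erase i) \ S).card := by
        rw [Finset.prod_ite, Finset.filter_mem_eq_inter, Finset.filter_notMem_eq_sdiff,
          Finset.inter_eq_right.mpr hSA, Finset.prod_const, Finset.prod_const]

theorem cubeMeasure_arrivedBefore_eq {n : ℕ} {i : Fin (n + 1)} {S : Finset (Fin (n + 1))}
    (hiS : i ∉ S) {T : Set ℝ} (hT : MeasurableSet T) (hT01 : T ⊆ Icc 0 1) :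
    cubeMeasure (n + 1) {x | arrivedBefore x i = S ∧ x i ∈ T}
      = ∫⁻ t in T, ENNReal.ofReal (t ^ S.card * (1 - t) ^ ((Finset.univ.erase i) \ S).card) := by
  set μ : Measure ℝ := volume.restrict (Icc 0 1)
  have hG := measurableSet_arrivedBefore_eq i S hT
  -- Fubini over the coordinate `i`: for `x i = t ∈ T` the event is a box in the other coordinates
  have hsplit := (measurePreserving_piFinSuccAbove (fun _ : Fin (n + 1) => μ) i).symm
  have hslice : ∀ t, (Measure.pi fun _ : Fin n => μ)
      (Prod.mk t ⁻¹' ((MeasurableEquiv.piFinSuccAbove (fun _ => ℝ) i).symm ⁻¹'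
        {x | arrivedBefore x i = S ∧ x i ∈ T}))
      = T.indicator (fun t => ENNReal.ofReal
          (t ^ S.card * (1 - t) ^ ((Finset.univ.erase i) \ S).card)) t := by
    intro t
    by_cases ht : t ∈ T
    · have hpi : Prod.mk t ⁻¹' ((MeasurableEquiv.piFinSuccAbove (fun _ => ℝ) i).symm ⁻¹'
          {x | arrivedBefore x i = S ∧ x i ∈ T})
          = Set.pi univ fun j => if i.succAbove j ∈ S then Iio t else Ici t := by
        ext y
        simpa [MeasurableEquiv.piFinSuccAbove_symm_apply, Fin.insertNthEquiv, ht]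
          using arrivedBefore_insertNth_eq_iff hiS t y
      have h01 := hT01 ht
      rw [hpi, Measure.pi_pi, indicator_of_mem ht, ← prod_succAbove_ite_eq_pow_mul_pow hiS,
        ENNReal.ofReal_prod_of_nonneg fun j _ => by split_ifs <;> linarith [h01.1, h01.2]]
      refine Finset.prod_congr rfl fun j _ => ?_
      split_ifs
      · exact volume_restrict_Icc_zero_one_Iio h01
      · exact volume_restrict_Icc_zero_one_Ici h01
    · have hempty : Prod.mk t ⁻¹' ((MeasurableEquiv.piFinSuccAbove (fun _ => ℝ) i).symm ⁻¹'
          {x | arrivedBefore x i = S ∧ x i ∈ T}) = ∅ := by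
        ext y
        simp [MeasurableEquiv.piFinSuccAbove_symm_apply, ht]
      rw [hempty, measure_empty, indicator_of_notMem ht]
  rw [cubeMeasure, ← hsplit.measure_preimage hG.nullMeasurableSet,
    Measure.prod_apply (hG.preimage hsplit.measurable), lintegral_congr hslice,
    lintegral_indicator hT, Measure.restrict_restrict hT, inter_eq_left.mpr hT01]

instance (m : ℕ) : IsProbabilityMeasure (cubeMeasure m) := by
  have : IsProbabilityMeasure (volume.restrict (Icc (0 : ℝ) 1)) := ⟨by simp⟩
  unfold cubeMeasure
  infer_instance

theorem cubeMeasure_real_arrivedBefore_Ico {n : ℕ} {i : Fin (n + 1)} {S : Finset (Fin (n + 1))}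
    (hiS : i ∉ S) {a b : ℝ} (ha : 0 ≤ a) (hab : a ≤ b) (hb : b ≤ 1) :
    (cubeMeasure (n + 1)).real {x | arrivedBefore x i = S ∧ x i ∈ Ico a b}
      = ∫ t in a..b, t ^ S.card * (1 - t) ^ ((Finset.univ.erase i) \ S).card := by
  have hIco : Ico a b ⊆ Icc 0 1 := fun t ht => ⟨ha.trans ht.1, ht.2.le.trans hb⟩
  have hnonneg : 0 ≤ᵐ[volume.restrict (Ico a b)]
      fun t : ℝ => t ^ S.card * (1 - t) ^ ((Finset.univ.erase i) \ S).card := by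
    refine ae_restrict_of_forall_mem measurableSet_Ico fun t ht => ?_
    have h01 := hIco ht
    exact mul_nonneg (pow_nonneg h01.1 _) (pow_nonneg (by linarith [h01.2]) _)
  rw [measureReal_def, cubeMeasure_arrivedBefore_eq hiS measurableSet_Ico hIco,
    ← integral_eq_lintegral_of_nonneg_ae hnonneg (by fun_prop),
    intervalIntegral.integral_of_le hab, integral_Ico_eq_integral_Ioc]

theorem pivotEvent_eq_biUnion {m : ℕ} (q : ℝ) {α : ℝ} (hα : 0 < α) (r : Fin m → ℝ)
    (i : Fin m) :
    pivotEvent m q α r i = ⋃ S ∈ (Finset.univ.erase i).powerset,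
      {x | arrivedBefore x i = S ∧
        x i ∈ Ico ((q - r i - ∑ j ∈ S, r j) / α) ((q - ∑ j ∈ S, r j) / α)} := by
  ext x
  have hsum : (∑ j, if x j < x i then r j else 0) = ∑ j ∈ arrivedBefore x i, r j :=
    (Finset.sum_filter _ _).symm
  simp only [pivotEvent, hsum, mem_ofPred_eq, mem_iUnion, exists_prop, Finset.mem_powerset,
    Set.mem_Ico, div_le_iff₀ hα, lt_div_iff₀ hα]
  constructor
  · rintro ⟨hlt, hle⟩
    refine ⟨arrivedBefore x i, fun j hj => ?_, rfl, by linarith, by linarith⟩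
    refine Finset.mem_erase.mpr ⟨fun hji => ?_, Finset.mem_univ j⟩
    simp [arrivedBefore, hji] at hj
  · rintro ⟨S, -, rfl, hle, hlt⟩
    exact ⟨by linarith, by linarith⟩

theorem minerValue_eq_sum_integral {n : ℕ} {q α : ℝ} {r : Fin (n + 1) → ℝ}
    (hr : ∀ j, 0 ≤ r j) (hsum : ∑ j, r j ≤ q) (hqα : q ≤ α) (hα : 0 < α) (i : Fin (n + 1)) :
    minerValue (n + 1) q α r i = ∑ S ∈ (Finset.univ.erase i).powerset,
      ∫ t in (q - r i - ∑ j ∈ S, r j) / α..(q - ∑ j ∈ S, r j) / α,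
        t ^ S.card * (1 - t) ^ ((Finset.univ.erase i) \ S).card := by
  rw [minerValue, ← measureReal_def, pivotEvent_eq_biUnion q hα r i,
    measureReal_biUnion_finset _ fun S _ => measurableSet_arrivedBefore_eq i S measurableSet_Ico]
  · refine Finset.sum_congr rfl fun S hS => ?_
    have hiS : i ∉ S := fun h => by simpa using Finset.mem_powerset.mp hS h
    have hle : r i + ∑ j ∈ S, r j ≤ q := by
      rw [← Finset.sum_insert hiS]
      exact (Finset.sum_le_sum_of_subset_of_nonneg (Finset.subset_univ _)
        fun j _ _ => hr j).trans hsum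
    have hS : 0 ≤ ∑ j ∈ S, r j := Finset.sum_nonneg fun j _ => hr j
    refine cubeMeasure_real_arrivedBefore_Ico hiS ?_ ?_ ?_
    · exact div_nonneg (by linarith) hα.le
    · exact div_le_div_of_nonneg_right (by linarith [hr i]) hα.le
    · rw [div_le_one hα]
      linarith
  · intro S _ S' _ hne
    exact Set.disjoint_left.mpr fun x h h' => hne (h.1.symm.trans h'.1)

end Probability

/-- Milnor–Shapley formula for the value of a major miner when the ocean holds a majority. -/
theorem stmt_0 (m : ℕ) (α : ℝ) (r : Fin m → ℝ) (hr : ∀ j, 0 ≤ r j) (hα : 0 < α)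
    (hsum : ∑ j, r j < 1 / 2) (hocean : 1 / 2 ≤ α) (i : Fin m) :
    minerValue m (1 / 2) α r i =
      r i / α ^ m *
        ∑ S ∈ ((Finset.univ : Finset (Fin m)).erase i).powerset,
          oceanicCoeff S.card * (∏ j ∈ S, r j) *
            ∏ k ∈ ((Finset.univ : Finset (Fin m)).erase i) \ S, (α - r k) := by
  obtain ⟨n, rfl⟩ : ∃ n, m = n + 1 := ⟨m - 1, by have := i.pos; omega⟩
  rw [minerValue_eq_sum_integral hr hsum.le hocean hα i, sum_integral_pow_mul_one_sub_pow,
    sum_oceanicCoeff_mul_prod, Finset.mul_sum, Finset.mul_sum]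
  refine Finset.sum_congr rfl fun U hU => ?_
  have hpow : α ^ (n + 1) = α ^ ((Finset.univ.erase i) \ U).card * α ^ U.card * α := by
    rw [← pow_add, Finset.card_sdiff_add_card_eq_card (Finset.mem_powerset.mp hU),
      Finset.card_erase_of_mem (Finset.mem_univ i), Finset.card_univ, Fintype.card_fin,
      Nat.add_sub_cancel, pow_succ]
  rw [Finset.prod_div_distrib, Finset.prod_const, hpow]
  field_simp
end

section
/- Let Γ = [1/2; r_1,…,r_m; α] be a blockchain oceanic game with r_1,…,r_m ≥ 0 and α ≥ 1/2, and let Γ⁺ = [1/2; r_1,…,r_m, r_{m+1}; α] be the game obtained by adding a new major miner m+1 with weight r_{m+1} > 0, where Σ_{j=1}^{m+1} r_j ≤ 1/2. Then the value per unit of resource of the new miner in Γ⁺ equals the oceanic value per unit of resource in Γ: φ⁺_{m+1}/r_{m+1} = Φ/α, where φ⁺_{m+1} is the value of miner m+1 in Γ⁺ and Φ is the oceanic value in Γ. -/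
/-!
Fix the times `y` of the other miners. As the time `t` of a miner runs through `[0, 1]`, the
resource `r(t) + α t` mined before it increases at speed `α` and jumps by `r_k` when `t` passes
`y_k`. A miner of weight `w` is pivotal at quota `q` iff this quantity lies in `[q - w, q)`, and
each level in `(q - w, q]` is either reached continuously or skipped by a jump; so `α` times its
value plus the expected length of `(q - w, q]` covered by jumps equals `w`. By Fubini that
expected length is `∫_{q-w}^q ∑_k φ_k(v) dv`, where `φ_k(v)` is the value of miner `k` among
the others at quota `v`. By induction on the number of miners, this identity shows that every
`φ_k(v)` is constant for `∑_j r_j ≤ v ≤ α`. For the new miner of `Γ⁺` it then reads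
`α φ⁺_{m+1} + w (1 - Φ) = w`.
-/

open MeasureTheory Finset

open scoped ENNReal

namespace OceanicGame

instance (m : ℕ) : IsProbabilityMeasure (cubeMeasure m) := by
  have : IsProbabilityMeasure (volume.restrict (Set.Icc (0 : ℝ) 1)) :=
    ⟨by simp [Real.volume_Icc]⟩
  unfold cubeMeasure
  infer_instance

lemma ae_cubeMeasure_nonneg (m : ℕ) : ∀ᵐ x ∂cubeMeasure m, ∀ k, 0 ≤ x k :=
  ae_all_iff.2 fun _ => Measure.tendsto_eval_ae_ae.eventually
    ((ae_restrict_mem measurableSet_Icc).mono fun _ h => h.1)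

lemma cubeMeasure_eq_coord_eq_zero {m : ℕ} {k l : Fin m} (hkl : k ≠ l) :
    cubeMeasure m {x | x k = x l} = 0 := by
  cases m with
  | zero => exact absurd (Subsingleton.elim k l) hkl
  | succ m =>
  obtain ⟨l', rfl⟩ := Fin.exists_succAbove_eq hkl.symm
  have hS : MeasurableSet {p : ℝ × (Fin m → ℝ) | p.1 = p.2 l'} :=
    measurableSet_eq_fun measurable_fst ((measurable_pi_apply l').comp measurable_snd)
  change cubeMeasure (m + 1) (MeasurableEquiv.piFinSuccAbove (fun _ => ℝ) k ⁻¹'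
    {p : ℝ × (Fin m → ℝ) | p.1 = p.2 l'}) = 0
  rw [cubeMeasure, (measurePreserving_piFinSuccAbove
    (fun _ : Fin (m + 1) => volume.restrict (Set.Icc (0 : ℝ) 1)) k).measure_preimage
    hS.nullMeasurableSet, Measure.prod_apply hS]
  -- each slice `{y | y l' = t}` is null because Lebesgue measure has no atoms
  refine lintegral_eq_zero_of_ae_eq_zero (Filter.Eventually.of_forall fun t => ?_)
  refine measure_mono_null (t := Function.eval l' ⁻¹' {t}) (fun y (hy : t = y l') => hy.symm)
    (Measure.pi_eval_preimage_null _ ?_)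
  exact Measure.restrict_le_self.absolutelyContinuous (measure_singleton t)

lemma ae_cubeMeasure_injective (m : ℕ) : ∀ᵐ x ∂cubeMeasure m, Function.Injective x := by
  have : ∀ᵐ x ∂cubeMeasure m, ∀ k l, k ≠ l → x k ≠ x l :=
    ae_all_iff.2 fun k => ae_all_iff.2 fun l => by
      by_cases hkl : k = l
      · exact Filter.Eventually.of_forall fun _ h => absurd hkl h
      · exact (measure_eq_zero_iff_ae_notMem.1 (cubeMeasure_eq_coord_eq_zero hkl)).mono
          fun _ hx _ => hx
  exact this.mono fun x hx k l => not_imp_not.1 (hx k l)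

lemma measure_inter_Iic_add_measure_inter_Ioc (μ : Measure ℝ) (s : Set ℝ) {a b : ℝ}
    (h : a ≤ b) : μ (s ∩ Set.Iic a) + μ (s ∩ Set.Ioc a b) = μ (s ∩ Set.Iic b) := by
  rw [← measure_inter_add_sdiff (s ∩ Set.Iic b) (measurableSet_Iic (a := a))]
  congr 2 <;> ext x <;>
    simp only [Set.mem_inter_iff, Set.mem_sdiff, Set.mem_Iic, Set.mem_Ioc] <;> grind

section Staircase

variable {m : ℕ} (α : ℝ) (r y : Fin m → ℝ)

/-- With the other miners at times `y`, the resource mined up to time `t`: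
`cumResource α r x (x i)` is the quantity `r(X_i) + α·X_i` of the pivot event. -/
noncomputable def cumResource (t : ℝ) : ℝ := (∑ k, if y k < t then r k else 0) + α * t

/-- The range of values skipped by `cumResource` at the jump of miner `k`. -/
def jumpIoc (k : Fin m) : Set ℝ :=
  Set.Ioc (cumResource α r y (y k)) (cumResource α r y (y k) + r k)

noncomputable def jumpOverlap (σ : ℝ) (k : Fin m) : ℝ :=
  min (r k) (max 0 (σ - cumResource α r y (y k)))

/-- The time at which `cumResource` reaches the level `σ`: the levels below `σ` that are not
skipped by a jump are swept at speed `α`. -/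
noncomputable def hittingTime (σ : ℝ) : ℝ := (σ - ∑ k, jumpOverlap α r y σ k) / α

lemma measurable_cumResource_uncurry :
    Measurable fun p : (Fin m → ℝ) × ℝ => cumResource α r p.1 p.2 :=
  (Finset.measurable_sum _ fun k _ => Measurable.ite
    (measurableSet_lt ((measurable_pi_apply k).comp measurable_fst) measurable_snd)
    measurable_const measurable_const).add (measurable_snd.const_mul α)

variable {α r y}

lemma jumpOverlap_nonneg (hr : ∀ k, 0 ≤ r k) (σ : ℝ) (k : Fin m) :
    0 ≤ jumpOverlap α r y σ k :=
  le_min (hr k) (le_max_left _ _)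

lemma jumpOverlap_eq_zero (hr : ∀ k, 0 ≤ r k) {σ : ℝ} {k : Fin m}
    (h : σ ≤ cumResource α r y (y k)) : jumpOverlap α r y σ k = 0 := by
  rw [jumpOverlap, max_eq_left (by linarith), min_eq_right (hr k)]

lemma jumpOverlap_eq_self (hr : ∀ k, 0 ≤ r k) {σ : ℝ} {k : Fin m}
    (h : cumResource α r y (y k) + r k ≤ σ) : jumpOverlap α r y σ k = r k := by
  rw [jumpOverlap, max_eq_right (by linarith [hr k]), min_eq_left (by linarith)]

lemma volume_jumpIoc_inter_Iic (hr : ∀ k, 0 ≤ r k) (σ : ℝ) (k : Fin m) :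
    volume (jumpIoc α r y k ∩ Set.Iic σ) = ENNReal.ofReal (jumpOverlap α r y σ k) := by
  rw [jumpIoc, Set.Ioc_inter_Iic, Real.volume_Ioc, jumpOverlap,
    ← min_sub_sub_right, add_sub_cancel_left]
  rcases le_total 0 (σ - cumResource α r y (y k)) with h | h
  · rw [max_eq_right h]
  · rw [max_eq_left h, min_eq_right (hr k), ENNReal.ofReal_zero, ENNReal.ofReal_eq_zero]
    exact (min_le_right _ _).trans h

lemma ofReal_jumpOverlap_sub (hr : ∀ k, 0 ≤ r k) {σ' σ : ℝ} (h : σ' ≤ σ) (k : Fin m) :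
    ENNReal.ofReal (jumpOverlap α r y σ k - jumpOverlap α r y σ' k) =
      volume (jumpIoc α r y k ∩ Set.Ioc σ' σ) := by
  have hsplit := measure_inter_Iic_add_measure_inter_Ioc volume (jumpIoc α r y k) h
  rw [volume_jumpIoc_inter_Iic hr, volume_jumpIoc_inter_Iic hr] at hsplit
  rw [ENNReal.ofReal_sub _ (jumpOverlap_nonneg hr σ' k), ← hsplit,
    ENNReal.add_sub_cancel_left ENNReal.ofReal_ne_top]

lemma cumResource_mono (hα : 0 ≤ α) (hr : ∀ k, 0 ≤ r k) : Monotone (cumResource α r y) := by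
  intro t t' h
  have hsum : (∑ k, if y k < t then r k else 0) ≤ ∑ k, if y k < t' then r k else 0 :=
    sum_le_sum fun k _ => by
      by_cases hk : y k < t
      · rw [if_pos hk, if_pos (hk.trans_le h)]
      · rw [if_neg hk]; split_ifs <;> simp [hr k]
  exact add_le_add hsum (mul_le_mul_of_nonneg_left h hα)

lemma cumResource_nonneg (hα : 0 ≤ α) (hr : ∀ k, 0 ≤ r k) {t : ℝ} (ht : 0 ≤ t) :
    0 ≤ cumResource α r y t :=
  add_nonneg (sum_nonneg fun k _ => by split_ifs <;> simp [hr k]) (mul_nonneg hα ht)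

lemma add_le_cumResource_of_lt (hα : 0 ≤ α) (hr : ∀ k, 0 ≤ r k) {k : Fin m} {t : ℝ}
    (h : y k < t) : cumResource α r y (y k) + r k ≤ cumResource α r y t := by
  have hk : k ∉ univ.filter fun j => y j < y k := by simp
  have hsub : insert k (univ.filter fun j => y j < y k) ⊆ univ.filter fun j => y j < t :=
    insert_subset (by simpa using h) fun j hj => by
      simp only [mem_filter, mem_univ, true_and] at hj ⊢
      exact hj.trans h
  have hsum : (∑ j, if y j < y k then r j else 0) + r k ≤ ∑ j, if y j < t then r j else 0 := by
    rw [← sum_filter, ← sum_filter, add_comm, ← sum_insert hk]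
    exact sum_le_sum_of_subset_of_nonneg hsub fun j _ _ => hr j
  have := mul_le_mul_of_nonneg_left h.le hα
  rw [cumResource, cumResource]
  linarith

lemma pairwise_disjoint_jumpIoc (hα : 0 ≤ α) (hr : ∀ k, 0 ≤ r k) (hy : Function.Injective y) :
    Pairwise (Function.onFun Disjoint (jumpIoc α r y)) := by
  have key : ∀ k l, y k < y l → Disjoint (jumpIoc α r y k) (jumpIoc α r y l) := fun _ _ h =>
    Set.Ioc_disjoint_Ioc_of_le (add_le_cumResource_of_lt hα hr h)
  intro k l hkl
  rcases (hy.ne hkl).lt_or_gt with h | h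
  exacts [key k l h, (key l k h).symm]

lemma sum_volume_jumpIoc_inter_le (hα : 0 ≤ α) (hr : ∀ k, 0 ≤ r k) (hy : Function.Injective y)
    (K : Finset (Fin m)) (s : Set ℝ) :
    ∑ k ∈ K, volume (jumpIoc α r y k ∩ s) ≤ volume s := by
  have hmeas : ∀ k, MeasurableSet (jumpIoc α r y k) := fun _ => measurableSet_Ioc
  have h := sum_measure_le_measure_univ (μ := volume.restrict s) (s := K)
    (fun k _ => (hmeas k).nullMeasurableSet)
    fun k _ l _ hkl => (pairwise_disjoint_jumpIoc hα hr hy hkl).aedisjoint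
  simpa only [Measure.restrict_apply (hmeas _), Measure.restrict_apply_univ] using h

lemma sum_jumpOverlap_sub_le (hα : 0 ≤ α) (hr : ∀ k, 0 ≤ r k) (hy : Function.Injective y)
    (K : Finset (Fin m)) {σ' σ : ℝ} (h : σ' ≤ σ) :
    ∑ k ∈ K, (jumpOverlap α r y σ k - jumpOverlap α r y σ' k) ≤ σ - σ' := by
  have hmono : ∀ k, jumpOverlap α r y σ' k ≤ jumpOverlap α r y σ k := fun k =>
    min_le_min le_rfl (max_le_max le_rfl (by linarith))
  rw [← ENNReal.ofReal_le_ofReal_iff (by linarith),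
    ENNReal.ofReal_sum_of_nonneg fun k _ => sub_nonneg.2 (hmono k), ← Real.volume_Ioc]
  simp only [ofReal_jumpOverlap_sub hr h]
  exact sum_volume_jumpIoc_inter_le hα hr hy K _

lemma le_hittingTime (hα : 0 < α) (hr : ∀ k, 0 ≤ r k) (hy : Function.Injective y) {t σ : ℝ}
    (hlt : cumResource α r y t < σ) : t ≤ hittingTime α r y σ := by
  set K := univ.filter fun k => y k < t
  have hg : cumResource α r y t = ∑ k ∈ K, r k + α * t := by rw [cumResource, sum_filter]
  have hK : ∑ k ∈ K, jumpOverlap α r y σ k ≤ ∑ k ∈ K, r k :=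
    sum_le_sum fun k _ => min_le_left _ _
  -- the jumps of the miners after `t` lie between `cumResource t` and `σ`
  have hKc : ∑ k ∈ Kᶜ, jumpOverlap α r y σ k ≤ σ - cumResource α r y t :=
    calc ∑ k ∈ Kᶜ, jumpOverlap α r y σ k
        = ∑ k ∈ Kᶜ, (jumpOverlap α r y σ k - jumpOverlap α r y (cumResource α r y t) k) :=
          sum_congr rfl fun k hk => by
            have hkt : t ≤ y k := not_lt.1 (by simpa [K] using hk)
            rw [jumpOverlap_eq_zero hr (cumResource_mono hα.le hr hkt), sub_zero]
      _ ≤ σ - cumResource α r y t := sum_jumpOverlap_sub_le hα.le hr hy _ hlt.le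
  rw [hittingTime, le_div_iff₀ hα, ← sum_add_sum_compl K]
  linarith

lemma hittingTime_le (hα : 0 < α) (hr : ∀ k, 0 ≤ r k) (hy : Function.Injective y) {t σ : ℝ}
    (hle : σ ≤ cumResource α r y t) : hittingTime α r y σ ≤ t := by
  set K := univ.filter fun k => y k < t
  have hg : cumResource α r y t = ∑ k ∈ K, r k + α * t := by rw [cumResource, sum_filter]
  -- the jumps of the miners before `t` lie below `cumResource t`
  have hK : ∑ k ∈ K, (r k - jumpOverlap α r y σ k) ≤ cumResource α r y t - σ :=
    calc ∑ k ∈ K, (r k - jumpOverlap α r y σ k)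
        = ∑ k ∈ K, (jumpOverlap α r y (cumResource α r y t) k - jumpOverlap α r y σ k) :=
          sum_congr rfl fun k hk => by
            rw [jumpOverlap_eq_self hr (add_le_cumResource_of_lt hα.le hr (mem_filter.1 hk).2)]
      _ ≤ cumResource α r y t - σ := sum_jumpOverlap_sub_le hα.le hr hy _ hle
  have hKc : 0 ≤ ∑ k ∈ Kᶜ, jumpOverlap α r y σ k :=
    sum_nonneg fun k _ => jumpOverlap_nonneg hr σ k
  rw [sum_sub_distrib] at hK
  rw [hittingTime, div_le_iff₀ hα, ← sum_add_sum_compl K]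
  linarith

lemma hittingTime_nonneg (hα : 0 < α) (hr : ∀ k, 0 ≤ r k) (hy : Function.Injective y)
    (hy0 : ∀ k, 0 ≤ y k) {σ : ℝ} (hσ : 0 ≤ σ) : 0 ≤ hittingTime α r y σ := by
  have h := sum_jumpOverlap_sub_le hα.le hr hy univ hσ
  simp only [jumpOverlap_eq_zero hr (cumResource_nonneg hα.le hr (hy0 _)), sub_zero] at h
  exact div_nonneg (by linarith) hα.le

lemma hittingTime_le_one (hα : 0 < α) (hr : ∀ k, 0 ≤ r k) (hy : Function.Injective y) {σ : ℝ}
    (hσ : σ ≤ α) : hittingTime α r y σ ≤ 1 :=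
  hittingTime_le hα hr hy (hσ.trans (by
    simpa [cumResource] using sum_nonneg fun k (_ : k ∈ univ) => by
      split_ifs <;> simp [hr k]))

lemma measurable_cumResource : Measurable (cumResource α r y) :=
  (measurable_cumResource_uncurry α r).comp measurable_prodMk_left

lemma restrict_Icc_cumResource_preimage_Iio (hα : 0 < α) (hr : ∀ k, 0 ≤ r k)
    (hy : Function.Injective y) (hy0 : ∀ k, 0 ≤ y k) {σ : ℝ} (hσ0 : 0 ≤ σ) (hσα : σ ≤ α) :
    volume.restrict (Set.Icc 0 1) (cumResource α r y ⁻¹' Set.Iio σ) =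
      ENNReal.ofReal (hittingTime α r y σ) := by
  have hT0 := hittingTime_nonneg hα hr hy hy0 hσ0
  have hT1 := hittingTime_le_one hα hr hy hσα
  have hlower :
      Set.Ico 0 (hittingTime α r y σ) ⊆ cumResource α r y ⁻¹' Set.Iio σ ∩ Set.Icc 0 1 :=
    fun t ht => ⟨not_le.1 fun hle => (hittingTime_le hα hr hy hle).not_gt ht.2,
      ht.1, ht.2.le.trans hT1⟩
  have hupper :
      cumResource α r y ⁻¹' Set.Iio σ ∩ Set.Icc 0 1 ⊆ Set.Icc 0 (hittingTime α r y σ) :=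
    fun t ht => ⟨ht.2.1, le_hittingTime hα hr hy ht.1⟩
  rw [Measure.restrict_apply' measurableSet_Icc]
  refine le_antisymm ((measure_mono hupper).trans_eq ?_) ((le_of_eq ?_).trans (measure_mono hlower))
  · rw [Real.volume_Icc, sub_zero]
  · rw [Real.volume_Ico, sub_zero]

lemma ofReal_mul_restrict_preimage_Iio_add_sum_volume_jumpIoc (hα : 0 < α)
    (hr : ∀ k, 0 ≤ r k) (hy : Function.Injective y) (hy0 : ∀ k, 0 ≤ y k) {σ : ℝ}
    (hσ0 : 0 ≤ σ) (hσα : σ ≤ α) :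
    ENNReal.ofReal α * volume.restrict (Set.Icc 0 1) (cumResource α r y ⁻¹' Set.Iio σ) +
      ∑ k, volume (jumpIoc α r y k ∩ Set.Iic σ) = ENNReal.ofReal σ := by
  rw [restrict_Icc_cumResource_preimage_Iio hα hr hy hy0 hσ0 hσα,
    ← ENNReal.ofReal_mul hα.le]
  simp only [volume_jumpIoc_inter_Iic hr]
  rw [← ENNReal.ofReal_sum_of_nonneg fun k _ => jumpOverlap_nonneg hr σ k,
    ← ENNReal.ofReal_add (mul_nonneg hα.le (hittingTime_nonneg hα hr hy hy0 hσ0))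
      (sum_nonneg fun k _ => jumpOverlap_nonneg hr σ k), hittingTime, mul_div_cancel₀ _ hα.ne',
    sub_add_cancel]

lemma ofReal_mul_restrict_preimage_Ico_add_sum_volume_jumpIoc (hα : 0 < α)
    (hr : ∀ k, 0 ≤ r k) (hy : Function.Injective y) (hy0 : ∀ k, 0 ≤ y k) {σ' σ : ℝ}
    (hσ' : 0 ≤ σ') (h : σ' ≤ σ) (hσα : σ ≤ α) :
    ENNReal.ofReal α * volume.restrict (Set.Icc 0 1) (cumResource α r y ⁻¹' Set.Ico σ' σ) +
      ∑ k, volume (jumpIoc α r y k ∩ Set.Ioc σ' σ) = ENNReal.ofReal (σ - σ') := by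
  have hν : ∀ ν : Measure ℝ, ν (cumResource α r y ⁻¹' Set.Iio σ') +
      ν (cumResource α r y ⁻¹' Set.Ico σ' σ) = ν (cumResource α r y ⁻¹' Set.Iio σ) := by
    intro ν
    have hdisj : Disjoint (Set.Iio σ') (Set.Ico σ' σ) :=
      Set.disjoint_left.2 fun _ hx hx' => not_le.2 hx hx'.1
    rw [← measure_union (hdisj.preimage _)
      (measurable_cumResource measurableSet_Ico), ← Set.preimage_union,
      Set.Iio_union_Ico_eq_Iio h]
  have hlow := ofReal_mul_restrict_preimage_Iio_add_sum_volume_jumpIoc hα hr hy hy0 hσ'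
    (h.trans hσα)
  have hhigh := ofReal_mul_restrict_preimage_Iio_add_sum_volume_jumpIoc hα hr hy hy0
    (hσ'.trans h) hσα
  rw [← hν, mul_add] at hhigh
  simp only [← measure_inter_Iic_add_measure_inter_Ioc volume _ h, sum_add_distrib] at hhigh
  refine (ENNReal.add_right_inj (a := ENNReal.ofReal σ') ENNReal.ofReal_ne_top).1 ?_
  rw [← ENNReal.ofReal_add hσ' (by linarith), add_sub_cancel, ← hhigh, ← hlow]
  ring

end Staircase

section Recursion

variable {m : ℕ}

lemma pivotEvent_eq_cumResource (q α : ℝ) (r : Fin m → ℝ) (i : Fin m) :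
    pivotEvent m q α r i =
      {x | cumResource α r x (x i) < q ∧ q ≤ cumResource α r x (x i) + r i} :=
  rfl

lemma cumResource_removeNth (α : ℝ) (r x : Fin (m + 1) → ℝ) (i : Fin (m + 1)) :
    cumResource α (r ∘ i.succAbove) (i.removeNth x) (x i) = cumResource α r x (x i) := by
  simp only [cumResource, Fin.sum_univ_succAbove _ i, lt_irrefl, if_false, zero_add]
  rfl

lemma cubeMeasure_pivotEvent_succ_eq_lintegral (s α : ℝ) (r : Fin (m + 1) → ℝ) (i : Fin (m + 1)) :
    cubeMeasure (m + 1) (pivotEvent (m + 1) s α r i) =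
      ∫⁻ y, volume.restrict (Set.Icc 0 1)
        (cumResource α (r ∘ i.succAbove) y ⁻¹' Set.Ico (s - r i) s) ∂cubeMeasure m := by
  set S : Set (ℝ × (Fin m → ℝ)) :=
    {p | cumResource α (r ∘ i.succAbove) p.2 p.1 ∈ Set.Ico (s - r i) s}
  have hS : MeasurableSet S :=
    ((measurable_cumResource_uncurry α _).comp measurable_swap) measurableSet_Ico
  have hpre : pivotEvent (m + 1) s α r i =
      MeasurableEquiv.piFinSuccAbove (fun _ => ℝ) i ⁻¹' S := by
    ext x
    change _ ↔ cumResource α (r ∘ i.succAbove) (i.removeNth x) (x i) ∈ Set.Ico (s - r i) s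
    rw [cumResource_removeNth, pivotEvent_eq_cumResource]
    constructor <;> rintro ⟨h1, h2⟩ <;> constructor <;> linarith
  rw [hpre, cubeMeasure, (measurePreserving_piFinSuccAbove _ i).measure_preimage
    hS.nullMeasurableSet, Measure.prod_apply_symm hS]
  rfl

lemma measurableSet_mem_jumpIoc (α : ℝ) (r : Fin m → ℝ) (k : Fin m) :
    MeasurableSet {p : (Fin m → ℝ) × ℝ | p.2 ∈ jumpIoc α r p.1 k} := by
  have hu : Measurable fun p : (Fin m → ℝ) × ℝ => cumResource α r p.1 (p.1 k) :=
    (measurable_cumResource_uncurry α r).comp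
      (measurable_fst.prodMk ((measurable_pi_apply k).comp measurable_fst))
  exact (measurableSet_lt hu measurable_snd).inter
    (measurableSet_le measurable_snd (hu.add_const _))

/-- Fubini: the pivot event of miner `k` at quota `v` is the set of positions whose jump
`jumpIoc` of miner `k` contains `v`. -/
lemma lintegral_volume_jumpIoc_inter (μ : Measure (Fin m → ℝ)) [SFinite μ] (α : ℝ)
    (r : Fin m → ℝ) (k : Fin m) {A : Set ℝ} (hA : MeasurableSet A) :
    ∫⁻ y, volume (jumpIoc α r y k ∩ A) ∂μ = ∫⁻ v in A, μ (pivotEvent m v α r k) := by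
  have hG := measurableSet_mem_jumpIoc α r k
  calc ∫⁻ y, volume (jumpIoc α r y k ∩ A) ∂μ
      = μ.prod (volume.restrict A) {p | p.2 ∈ jumpIoc α r p.1 k} := by
        rw [Measure.prod_apply hG]
        exact lintegral_congr fun y => (Measure.restrict_apply' hA).symm
    _ = ∫⁻ v in A, μ (pivotEvent m v α r k) := Measure.prod_apply_symm hG

theorem ofReal_mul_cubeMeasure_pivotEvent_add_lintegral {α : ℝ} (hα : 0 < α)
    (r : Fin (m + 1) → ℝ) (hr : ∀ k, 0 ≤ r k) (i : Fin (m + 1)) {s : ℝ} (hs : r i ≤ s)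
    (hsα : s ≤ α) :
    ENNReal.ofReal α * cubeMeasure (m + 1) (pivotEvent (m + 1) s α r i) +
      ∫⁻ v in Set.Ioc (s - r i) s,
        ∑ k, cubeMeasure m (pivotEvent m v α (r ∘ i.succAbove) k) = ENNReal.ofReal (r i) := by
  set r' := r ∘ i.succAbove
  have hr' : ∀ k, 0 ≤ r' k := fun k => hr _
  have hG := measurableSet_mem_jumpIoc α r'
  have hslice : ∀ᵐ y ∂cubeMeasure m,
      ENNReal.ofReal α *
          volume.restrict (Set.Icc 0 1) (cumResource α r' y ⁻¹' Set.Ico (s - r i) s) +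
        ∑ k, volume (jumpIoc α r' y k ∩ Set.Ioc (s - r i) s) = ENNReal.ofReal (r i) := by
    filter_upwards [ae_cubeMeasure_injective m, ae_cubeMeasure_nonneg m] with y hy hy0
    rw [ofReal_mul_restrict_preimage_Ico_add_sum_volume_jumpIoc hα hr' hy hy0 (by linarith)
      (by linarith [hr i]) hsα, sub_sub_cancel]
  have hmeas_v : ∀ k, Measurable fun v => cubeMeasure m (pivotEvent m v α r' k) :=
    fun k => measurable_measure_prodMk_right (hG k)
  have hmeas_y : ∀ k, Measurable fun y => volume (jumpIoc α r' y k ∩ Set.Ioc (s - r i) s) := by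
    intro k
    have h := measurable_measure_prodMk_left (ν := volume.restrict (Set.Ioc (s - r i) s)) (hG k)
    simp only [Measure.restrict_apply' measurableSet_Ioc] at h
    exact h
  calc ENNReal.ofReal α * cubeMeasure (m + 1) (pivotEvent (m + 1) s α r i) +
        ∫⁻ v in Set.Ioc (s - r i) s, ∑ k, cubeMeasure m (pivotEvent m v α r' k)
      = ∫⁻ y, ENNReal.ofReal α *
            volume.restrict (Set.Icc 0 1) (cumResource α r' y ⁻¹' Set.Ico (s - r i) s)
            ∂cubeMeasure m +
          ∫⁻ y, ∑ k, volume (jumpIoc α r' y k ∩ Set.Ioc (s - r i) s) ∂cubeMeasure m := by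
        rw [cubeMeasure_pivotEvent_succ_eq_lintegral,
          lintegral_const_mul' _ _ ENNReal.ofReal_ne_top,
          lintegral_finsetSum _ fun k _ => hmeas_y k,
          lintegral_finsetSum _ fun k _ => hmeas_v k]
        simp only [lintegral_volume_jumpIoc_inter _ α r' _ measurableSet_Ioc]
        rfl
    _ = ENNReal.ofReal (r i) := by
        rw [← lintegral_add_right' _ (Finset.measurable_sum _ fun k _ => hmeas_y k).aemeasurable,
          lintegral_congr_ae hslice, lintegral_const, measure_univ, mul_one]

end Recursion

lemma setLIntegral_Ioc_eq_of_forall_eq {f : ℝ → ℝ≥0∞} {a b c : ℝ}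
    (h : ∀ v ∈ Set.Ioc a b, f v = f c) :
    ∫⁻ v in Set.Ioc a b, f v = f c * ENNReal.ofReal (b - a) := by
  rw [setLIntegral_congr_fun measurableSet_Ioc h, setLIntegral_const, Real.volume_Ioc]

theorem cubeMeasure_pivotEvent_eq_of_sum_le {α : ℝ} (hα : 0 < α) {m : ℕ} {r : Fin m → ℝ}
    (hr : ∀ j, 0 ≤ r j) {s s' : ℝ} (hs : ∑ j, r j ≤ s) (hsα : s ≤ α) (hs' : ∑ j, r j ≤ s')
    (hs'α : s' ≤ α) (k : Fin m) :
    cubeMeasure m (pivotEvent m s α r k) = cubeMeasure m (pivotEvent m s' α r k) := by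
  induction m generalizing s s' with
  | zero => exact k.elim0
  | succ m ih =>
    set r' := r ∘ k.succAbove
    have hsum : ∑ j, r j = r k + ∑ j, r' j := Fin.sum_univ_succAbove r k
    have hr' : ∀ j, 0 ≤ r' j := fun j => hr _
    have hr'sum : 0 ≤ ∑ j, r' j := sum_nonneg fun j _ => hr' j
    have hwindow : ∀ t, ∑ j, r j ≤ t → t ≤ α →
        ∫⁻ v in Set.Ioc (t - r k) t, ∑ j, cubeMeasure m (pivotEvent m v α r' j) =
          (∑ j, cubeMeasure m (pivotEvent m (∑ j, r' j) α r' j)) * ENNReal.ofReal (r k) :=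
      fun t ht htα => by
        rw [setLIntegral_Ioc_eq_of_forall_eq fun v hv => sum_congr rfl fun j _ =>
          ih hr' (by linarith [hv.1]) (hv.2.trans htα) le_rfl (by linarith [hr k]) j,
          sub_sub_cancel]
    have hfin : (∑ j, cubeMeasure m (pivotEvent m (∑ j, r' j) α r' j)) *
        ENNReal.ofReal (r k) ≠ ⊤ :=
      ENNReal.mul_ne_top (ENNReal.sum_ne_top.2 fun _ _ => measure_ne_top _ _)
        ENNReal.ofReal_ne_top
    have h := ofReal_mul_cubeMeasure_pivotEvent_add_lintegral hα r hr k (by linarith) hsα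
    have h' := ofReal_mul_cubeMeasure_pivotEvent_add_lintegral hα r hr k (by linarith) hs'α
    rw [hwindow s hs hsα] at h
    rw [hwindow s' hs' hs'α] at h'
    exact (ENNReal.mul_right_inj (ENNReal.ofReal_pos.2 hα).ne' ENNReal.ofReal_ne_top).1
      ((ENNReal.add_left_inj hfin).1 (h.trans h'.symm))

end OceanicGame

open OceanicGame

/-- Entry theorem (q = 1/2): the value per unit of resource of a newly entering miner
in `Γ⁺` equals the oceanic value per unit of resource in `Γ`. -/
theorem stmt_1 (m : ℕ) (α : ℝ) (r : Fin m → ℝ) (w : ℝ) (hr : ∀ j, 0 ≤ r j)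
    (hα : 1 / 2 ≤ α) (hw : 0 < w) (hsum : (∑ j, r j) + w ≤ 1 / 2) :
    minerValue (m + 1) (1 / 2) α (Fin.snoc r w) (Fin.last m) / w =
      oceanicValue m (1 / 2) α r / α := by
  have hα0 : 0 < α := by linarith
  have hrsum : 0 ≤ ∑ j, r j := sum_nonneg fun j _ => hr j
  have hsnoc : ∀ j, 0 ≤ (Fin.snoc r w : Fin (m + 1) → ℝ) j :=
    Fin.lastCases (by simpa using hw.le) (by simpa using hr)
  have hconst : ∀ v ∈ Set.Ioc (1 / 2 - w) (1 / 2), ∑ k, cubeMeasure m (pivotEvent m v α r k) =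
      ∑ k, cubeMeasure m (pivotEvent m (1 / 2) α r k) := fun v hv =>
    sum_congr rfl fun k _ => cubeMeasure_pivotEvent_eq_of_sum_le hα0 hr (by linarith [hv.1])
      (hv.2.trans hα) (by linarith) hα k
  have key := ofReal_mul_cubeMeasure_pivotEvent_add_lintegral hα0 _ hsnoc (Fin.last m)
    (s := 1 / 2) (by simp; linarith) hα
  rw [Fin.snoc_last, Fin.succAbove_last, Fin.snoc_comp_castSucc,
    setLIntegral_Ioc_eq_of_forall_eq hconst, sub_sub_cancel] at key
  have hreal : α * minerValue (m + 1) (1 / 2) α (Fin.snoc r w) (Fin.last m) +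
      (∑ k, minerValue m (1 / 2) α r k) * w = w := by
    have hfin := ENNReal.add_ne_top.1 (key ▸ ENNReal.ofReal_ne_top)
    have := congrArg ENNReal.toReal key
    rw [ENNReal.toReal_add hfin.1 hfin.2, ENNReal.toReal_mul,
      ENNReal.toReal_mul, ENNReal.toReal_sum (by finiteness), ENNReal.toReal_ofReal hα0.le,
      ENNReal.toReal_ofReal hw.le] at this
    exact this
  rw [div_eq_div_iff hw.ne' hα0.ne', oceanicValue]
  linarith
end

section
/- Let q > 0 and let Γ = [q; r_1,…,r_m; α] be a blockchain oceanic game with r_1,…,r_m ≥ 0 and ocean mass α ≥ q, and let Γ⁺ = [q; r_1,…,r_m, r_{m+1}; α] be obtained by adding a new major miner with weight r_{m+1} > 0 such that Σ_{j=1}^{m+1} r_j ≤ q. Then φ⁺_{m+1}/r_{m+1} = Φ/α, i.e., the new miner's value per unit of resource in Γ⁺ equals the oceanic value per unit of resource in Γ. (This extends the q = 1/2 case to an arbitrary quota.) -/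
open MeasureTheory Finset

/-
Fix the positions `y` of the incumbent miners (weights `s`) and let `g(t) = r(t) + α t` be the
resource ahead of a newcomer of weight `ρ` placed at `t`. The function `g` increases with slope `α`
between jumps of size `s k` at the points `y k`, so the newcomer is pivotal on a set of `t` of
measure `|(q - ρ, q] \ ⋃ jumps| / α`. Integrating over `y` and exchanging the two integrals, a
level `u` misses every jump with probability `Φ(u)`, the oceanic value of `Γ` with quota `u`:
`α φ⁺ = ∫_{q-ρ}^{q} Φ(u) du`. The same formula, by induction on the number of miners, shows that
`Φ(u)` does not depend on `u ∈ [∑ r, α]`, whence `α φ⁺ = ρ Φ(q)`.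
-/

namespace OceanicGame

variable {m : ℕ} {α : ℝ} {s y : Fin m → ℝ}

noncomputable def unitMeasure : Measure ℝ := volume.restrict (Set.Icc 0 1)

instance : IsProbabilityMeasure unitMeasure :=
  ⟨by simp [unitMeasure, Real.volume_Icc]⟩

instance : NullSingletonClass unitMeasure := by
  unfold unitMeasure; infer_instance

lemma cubeMeasure_eq_pi (m : ℕ) : cubeMeasure m = Measure.pi fun _ => unitMeasure := rfl

instance inst_s2 (m : ℕ) : IsProbabilityMeasure (cubeMeasure m) := by
  rw [cubeMeasure_eq_pi]; infer_instance

/-- The paper's `r(t) + α t`, for miners of weights `s` at positions `y`. -/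
noncomputable def stepFun (α : ℝ) (s y : Fin m → ℝ) (t : ℝ) : ℝ :=
  (∑ k, if y k < t then s k else 0) + α * t

def jump (α : ℝ) (s y : Fin m → ℝ) (k : Fin m) : Set ℝ :=
  Set.Ioc (stepFun α s y (y k)) (stepFun α s y (y k) + s k)

lemma pivotEvent_eq_setOf_mem_jump (q : ℝ) (k : Fin m) :
    pivotEvent m q α s k = {y | q ∈ jump α s y k} := rfl

lemma monotone_stepFun (hα : 0 ≤ α) (hs : ∀ k, 0 ≤ s k) : Monotone (stepFun α s y) := by
  intro t t' htt'
  have hsum : (∑ k, if y k < t then s k else 0) ≤ ∑ k, if y k < t' then s k else 0 :=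
    sum_le_sum fun k _ => by split_ifs <;> first | exact le_rfl | exact hs k | linarith
  unfold stepFun
  nlinarith

lemma stepFun_add_le_of_lt (hα : 0 ≤ α) (hs : ∀ k, 0 ≤ s k) {k : Fin m} {t : ℝ}
    (hkt : y k < t) : stepFun α s y (y k) + s k ≤ stepFun α s y t := by
  classical
  have hsub : insert k (univ.filter fun j => y j < y k) ⊆ univ.filter fun j => y j < t := by
    intro j hj
    simp only [mem_insert, mem_filter, mem_univ, true_and] at hj ⊢
    rcases hj with rfl | hj
    exacts [hkt, hj.trans hkt]
  have hsum := sum_le_sum_of_subset_of_nonneg hsub fun j _ _ => hs j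
  rw [sum_insert (by simp)] at hsum
  unfold stepFun
  rw [← sum_filter, ← sum_filter]
  nlinarith

lemma pairwise_disjoint_jump (hα : 0 ≤ α) (hs : ∀ k, 0 ≤ s k) (hy : Function.Injective y) :
    Pairwise (Function.onFun Disjoint (jump α s y)) := by
  have key : ∀ j k, y j < y k → Disjoint (jump α s y j) (jump α s y k) := fun j k h =>
    Set.Ioc_disjoint_Ioc_of_le (stepFun_add_le_of_lt hα hs h)
  intro j k hjk
  rcases (hy.ne hjk).lt_or_gt with h | h
  exacts [key j k h, (key k j h).symm]

lemma measurable_stepFun {X : Type*} [MeasurableSpace X] {f : X → Fin m → ℝ} {g : X → ℝ}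
    (hf : Measurable f) (hg : Measurable g) : Measurable fun p => stepFun α s (f p) (g p) :=
  (Finset.measurable_sum _ fun k _ => Measurable.ite
    (measurableSet_lt ((measurable_pi_apply k).comp hf) hg) measurable_const measurable_const).add
    (measurable_const.mul hg)

lemma measurableSet_mem_jump {X : Type*} [MeasurableSpace X] (s : Fin m → ℝ)
    {f : X → Fin m → ℝ} {g : X → ℝ} (hf : Measurable f) (hg : Measurable g) (k : Fin m) :
    MeasurableSet {p | g p ∈ jump α s (f p) k} :=
  have hL := measurable_stepFun (α := α) (s := s) hf ((measurable_pi_apply k).comp hf)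
  (measurableSet_lt hL hg).inter (measurableSet_le hg (hL.add_const _))

lemma measurableSet_pivotEvent (q : ℝ) (s : Fin m → ℝ) (k : Fin m) :
    MeasurableSet (pivotEvent m q α s k) :=
  measurableSet_mem_jump s measurable_id measurable_const k

lemma volume_Ioc_stepFun_diff_jumps (hα : 0 ≤ α) (hs : ∀ k, 0 ≤ s k) (hy0 : ∀ k, 0 ≤ y k)
    (hy : Function.Injective y) (t : ℝ) :
    volume (Set.Ioc 0 (stepFun α s y t) \ ⋃ k, jump α s y k) = ENNReal.ofReal (α * t) := by
  classical
  set F := univ.filter fun k => y k < t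
  have hstart : ∀ k, 0 ≤ stepFun α s y (y k) := fun k => by
    have h0 : stepFun α s y 0 = 0 := by simp [stepFun, fun k => (hy0 k).not_gt]
    exact h0 ▸ monotone_stepFun hα hs (hy0 k)
  -- The jumps at `y k < t` lie inside `(0, g t]`, the others beyond `g t`.
  have hinter : Set.Ioc 0 (stepFun α s y t) ∩ ⋃ k, jump α s y k = ⋃ k ∈ F, jump α s y k := by
    ext u
    simp only [Set.mem_inter_iff, Set.mem_iUnion, F, mem_filter, mem_univ, true_and,
      exists_prop, jump, Set.mem_Ioc]
    constructor
    · rintro ⟨⟨-, hu⟩, k, hk₁, hk₂⟩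
      refine ⟨k, ?_, hk₁, hk₂⟩
      by_contra! htk
      linarith [monotone_stepFun hα hs htk (y := y)]
    · rintro ⟨k, hkt, hk₁, hk₂⟩
      exact ⟨⟨(hstart k).trans_lt hk₁, hk₂.trans (stepFun_add_le_of_lt hα hs hkt)⟩, k, hk₁, hk₂⟩
  have hvol : volume (⋃ k ∈ F, jump α s y k) = ENNReal.ofReal (∑ k ∈ F, s k) := by
    rw [measure_biUnion_finset (fun j _ k _ hjk => pairwise_disjoint_jump hα hs hy hjk)
      fun k _ => measurableSet_Ioc, ENNReal.ofReal_sum_of_nonneg fun k _ => hs k]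
    refine sum_congr rfl fun k _ => ?_
    rw [jump, Real.volume_Ioc, add_sub_cancel_left]
  have hsplit : stepFun α s y t = α * t + ∑ k ∈ F, s k := by
    rw [stepFun, sum_filter, add_comm]
  rw [← Set.sdiff_self_inter, hinter, measure_sdiff, hvol, Real.volume_Ioc, sub_zero, hsplit,
    ← ENNReal.ofReal_sub _ (sum_nonneg fun k _ => hs k), add_sub_cancel_right]
  · exact hinter ▸ Set.inter_subset_left
  · exact (MeasurableSet.biUnion F.countable_toSet fun k _ => measurableSet_Ioc).nullMeasurableSet
  · exact hvol ▸ ENNReal.ofReal_ne_top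

lemma unitMeasure_stepFun_lt (hα : 0 < α) (hs : ∀ k, 0 ≤ s k) (hy01 : ∀ k, y k ∈ Set.Icc 0 1)
    (hy : Function.Injective y) {c : ℝ} (hcα : c ≤ α) :
    unitMeasure {t | stepFun α s y t < c} =
      volume (Set.Ioc 0 c \ ⋃ k, jump α s y k) / ENNReal.ofReal α := by
  set W : ℝ → ENNReal := fun c => volume (Set.Ioc 0 c \ ⋃ k, jump α s y k)
  have hWmono : Monotone W := fun a b hab =>
    measure_mono (Set.sdiff_subset_sdiff_left (Set.Ioc_subset_Ioc_right hab))
  have hWstep : ∀ t, W (stepFun α s y t) = ENNReal.ofReal (α * t) :=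
    volume_Ioc_stepFun_diff_jumps hα.le hs (fun k => (hy01 k).1) hy
  have hWc : W c ≤ ENNReal.ofReal α := by
    calc W c ≤ volume (Set.Ioc 0 α) :=
          measure_mono (Set.sdiff_subset.trans (Set.Ioc_subset_Ioc_right hcα))
      _ = ENNReal.ofReal α := by rw [Real.volume_Ioc, sub_zero]
  have hWc_top : W c ≠ ⊤ := ne_top_of_le_ne_top ENNReal.ofReal_ne_top hWc
  -- Up to an endpoint, `{t ∈ [0, 1] | g t < c}` is `[0, τ)`: the length `α t` left uncovered by
  -- jumps below `g t` increases with `t`.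
  set τ := (W c).toReal / α
  have hτ : τ ≤ 1 := (div_le_one hα).2 (ENNReal.toReal_le_of_le_ofReal hα.le hWc)
  have hlower : Set.Ico 0 τ ⊆ {t | stepFun α s y t < c} ∩ Set.Icc 0 1 := by
    rintro t ⟨ht0, htτ⟩
    refine ⟨show stepFun α s y t < c from ?_, ht0, htτ.le.trans hτ⟩
    by_contra! hct
    have := ENNReal.toReal_le_of_le_ofReal (by positivity) ((hWmono hct).trans (hWstep t).le)
    rw [lt_div_iff₀ hα] at htτ
    linarith
  have hupper : {t | stepFun α s y t < c} ∩ Set.Icc 0 1 ⊆ Set.Icc 0 τ := by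
    rintro t ⟨hct, ht0, -⟩
    refine ⟨ht0, (le_div_iff₀ hα).2 ?_⟩
    rw [mul_comm, ← ENNReal.ofReal_le_iff_le_toReal hWc_top, ← hWstep]
    exact hWmono (le_of_lt hct)
  rw [unitMeasure, Measure.restrict_apply' measurableSet_Icc]
  change _ = W c / _
  rw [← ENNReal.ofReal_toReal hWc_top, ← ENNReal.ofReal_div_of_pos hα]
  refine le_antisymm ?_ ?_
  · simpa [Real.volume_Icc] using measure_mono hupper (μ := volume)
  · simpa [Real.volume_Ico] using measure_mono hlower (μ := volume)

lemma unitMeasure_stepFun_lt_and_le_add (hα : 0 < α) (hs : ∀ k, 0 ≤ s k) (hy01 : ∀ k, y k ∈ Set.Icc 0 1)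
    (hy : Function.Injective y) {q ρ : ℝ} (hρ : 0 ≤ ρ) (hρq : ρ ≤ q) (hqα : q ≤ α) :
    unitMeasure {t | stepFun α s y t < q ∧ q ≤ stepFun α s y t + ρ} =
      volume (Set.Ioc (q - ρ) q \ ⋃ k, jump α s y k) / ENNReal.ofReal α := by
  have hsub : {t | stepFun α s y t < q - ρ} ⊆ {t | stepFun α s y t < q} :=
    Set.ofPred_subset_ofPred.2 fun t ht => by linarith
  have hsub' : Set.Ioc 0 (q - ρ) \ ⋃ k, jump α s y k ⊆ Set.Ioc 0 q \ ⋃ k, jump α s y k :=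
    Set.sdiff_subset_sdiff_left (Set.Ioc_subset_Ioc_right (by linarith))
  have hset : {t | stepFun α s y t < q ∧ q ≤ stepFun α s y t + ρ} =
      {t | stepFun α s y t < q} \ {t | stepFun α s y t < q - ρ} := by
    ext t
    simp only [Set.mem_ofPred_eq, Set.mem_sdiff, not_lt, sub_le_iff_le_add]
  have hset' : Set.Ioc (q - ρ) q \ ⋃ k, jump α s y k =
      (Set.Ioc 0 q \ ⋃ k, jump α s y k) \ (Set.Ioc 0 (q - ρ) \ ⋃ k, jump α s y k) := by
    ext u
    simp only [Set.mem_sdiff, Set.mem_Ioc]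
    constructor
    · rintro ⟨⟨h₁, h₂⟩, hu⟩
      exact ⟨⟨⟨by linarith, h₂⟩, hu⟩, fun h => by linarith [h.1.2]⟩
    · rintro ⟨⟨⟨h₁, h₂⟩, hu⟩, h₃⟩
      exact ⟨⟨lt_of_not_ge fun h => h₃ ⟨⟨h₁, h⟩, hu⟩, h₂⟩, hu⟩
  rw [hset, measure_sdiff hsub
      (measurableSet_lt (measurable_stepFun measurable_const measurable_id)
        measurable_const).nullMeasurableSet
      (measure_ne_top _ _),
    unitMeasure_stepFun_lt hα hs hy01 hy hqα, unitMeasure_stepFun_lt hα hs hy01 hy (by linarith),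
    hset', measure_sdiff hsub'
      (measurableSet_Ioc.diff (MeasurableSet.iUnion fun k => measurableSet_Ioc)).nullMeasurableSet
      (measure_mono Set.sdiff_subset |>.trans_lt measure_Ioc_lt_top).ne,
    ENNReal.sub_div fun _ _ => (ENNReal.ofReal_pos.2 hα).ne']

lemma cubeMeasure_succ_preimage (i : Fin (m + 1)) {S : Set (ℝ × (Fin m → ℝ))}
    (hS : MeasurableSet S) :
    cubeMeasure (m + 1) (MeasurableEquiv.piFinSuccAbove (fun _ => ℝ) i ⁻¹' S) =
      ∫⁻ y, unitMeasure {t | (t, y) ∈ S} ∂cubeMeasure m := by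
  rw [← Measure.map_apply (MeasurableEquiv.measurable _) hS, cubeMeasure_eq_pi,
    (measurePreserving_piFinSuccAbove (fun _ => unitMeasure) i).map_eq,
    Measure.prod_apply_symm hS]
  rfl

lemma cubeMeasure_setOf_eq_eq_zero {j k : Fin m} (hjk : j ≠ k) : cubeMeasure m {y | y j = y k} = 0 := by
  cases m with
  | zero => exact j.elim0
  | succ m =>
    obtain ⟨k', rfl⟩ := Fin.exists_succAbove_eq hjk.symm
    have hS : MeasurableSet {p : ℝ × (Fin m → ℝ) | p.1 = p.2 k'} :=
      measurableSet_eq_fun measurable_fst ((measurable_pi_apply k').comp measurable_snd)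
    have := cubeMeasure_succ_preimage j hS
    simpa [Set.ofPred_eq_eq_singleton, Fin.removeNth] using this

lemma ae_injective (m : ℕ) : ∀ᵐ y ∂cubeMeasure m, Function.Injective y := by
  have : ∀ j k : Fin m, ∀ᵐ y ∂cubeMeasure m, j ≠ k → y j ≠ y k := fun j k => by
    by_cases hjk : j = k
    · exact .of_forall fun _ h => absurd hjk h
    · exact measure_mono_null (fun y hy => by_contra fun h => hy fun _ => h)
        (cubeMeasure_setOf_eq_eq_zero hjk)
  filter_upwards [ae_all_iff.2 fun j => ae_all_iff.2 (this j)] with y hy j k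
  exact not_imp_not.1 (hy j k)

lemma ae_mem_Icc (m : ℕ) : ∀ᵐ y ∂cubeMeasure m, ∀ k, y k ∈ Set.Icc (0 : ℝ) 1 :=
  ae_all_iff.2 fun _ => Measure.tendsto_eval_ae_ae.eventually (ae_restrict_mem measurableSet_Icc)

lemma cubeMeasure_iUnion_pivotEvent (hα : 0 ≤ α) {s : Fin m → ℝ} (hs : ∀ k, 0 ≤ s k) (u : ℝ) :
    cubeMeasure m (⋃ k, pivotEvent m u α s k) = ∑ k, cubeMeasure m (pivotEvent m u α s k) := by
  rw [measure_iUnion₀ _ fun k => (measurableSet_pivotEvent u s k).nullMeasurableSet,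
    tsum_fintype]
  intro j k hjk
  refine measure_mono_null ?_ (ae_iff.1 (ae_injective m))
  intro y hy hinj
  exact Set.disjoint_left.1 (pairwise_disjoint_jump hα hs hinj hjk) hy.1 hy.2

lemma oceanicValue_eq_toReal (hα : 0 ≤ α) {s : Fin m → ℝ} (hs : ∀ k, 0 ≤ s k) (u : ℝ) :
    oceanicValue m u α s = (cubeMeasure m (⋃ k, pivotEvent m u α s k)ᶜ).toReal := by
  have hle := cubeMeasure_iUnion_pivotEvent hα hs u ▸ prob_le_one
  rw [measure_compl (MeasurableSet.iUnion fun k => measurableSet_pivotEvent u s k)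
      (measure_ne_top _ _), measure_univ, cubeMeasure_iUnion_pivotEvent hα hs u,
    ENNReal.toReal_sub_of_le hle ENNReal.one_ne_top,
    ENNReal.toReal_sum fun k _ => measure_ne_top _ _]
  rfl

lemma lintegral_volume_diff_jumps (s : Fin m → ℝ) (a b : ℝ) :
    ∫⁻ y, volume (Set.Ioc a b \ ⋃ k, jump α s y k) ∂cubeMeasure m =
      ∫⁻ u in Set.Ioc a b, cubeMeasure m (⋃ k, pivotEvent m u α s k)ᶜ := by
  have hT : MeasurableSet {p : (Fin m → ℝ) × ℝ | p.2 ∈ ⋃ k, jump α s p.1 k}ᶜ := by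
    simp only [Set.mem_iUnion, Set.ofPred_exists]
    exact (MeasurableSet.iUnion fun k =>
      measurableSet_mem_jump s measurable_fst measurable_snd k).compl
  have := Measure.prod_apply_symm hT (μ := cubeMeasure m) (ν := volume.restrict (Set.Ioc a b))
  rw [Measure.prod_apply hT] at this
  convert this using 3 with y u
  · rw [Measure.restrict_apply' measurableSet_Ioc, Set.sdiff_eq_compl_inter]
    rfl
  · congr 1
    ext y
    simp [pivotEvent_eq_setOf_mem_jump]

lemma pivotEvent_succ_eq_preimage (q : ℝ) (r : Fin (m + 1) → ℝ) (i : Fin (m + 1)) :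
    pivotEvent (m + 1) q α r i = MeasurableEquiv.piFinSuccAbove (fun _ => ℝ) i ⁻¹'
      {p | stepFun α (fun k => r (i.succAbove k)) p.2 p.1 < q ∧
        q ≤ stepFun α (fun k => r (i.succAbove k)) p.2 p.1 + r i} := by
  ext x
  have hsum : (∑ j, if x j < x i then r j else 0) =
      ∑ k, if x (i.succAbove k) < x i then r (i.succAbove k) else 0 := by
    simp [Fin.sum_univ_succAbove _ i]
  simp only [pivotEvent, Set.mem_preimage, Set.mem_ofPred_eq, hsum]
  rfl

lemma ofReal_mul_cubeMeasure_pivotEvent_succ (hα : 0 < α) {r : Fin (m + 1) → ℝ}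
    (hr : ∀ j, 0 ≤ r j) {q : ℝ} {i : Fin (m + 1)} (hri : r i ≤ q) (hqα : q ≤ α) :
    ENNReal.ofReal α * cubeMeasure (m + 1) (pivotEvent (m + 1) q α r i) =
      ∫⁻ u in Set.Ioc (q - r i) q,
        cubeMeasure m (⋃ k, pivotEvent m u α (fun k => r (i.succAbove k)) k)ᶜ := by
  set s := fun k => r (i.succAbove k)
  have hS : MeasurableSet {p : ℝ × (Fin m → ℝ) | stepFun α s p.2 p.1 < q ∧
      q ≤ stepFun α s p.2 p.1 + r i} :=
    have hg := measurable_stepFun (α := α) (s := s) measurable_snd measurable_fst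
    (measurableSet_lt hg measurable_const).inter
      (measurableSet_le measurable_const (hg.add_const _))
  have hslice : ∀ᵐ y ∂cubeMeasure m,
      unitMeasure {t | stepFun α s y t < q ∧ q ≤ stepFun α s y t + r i} =
        volume (Set.Ioc (q - r i) q \ ⋃ k, jump α s y k) * (ENNReal.ofReal α)⁻¹ := by
    filter_upwards [ae_mem_Icc m, ae_injective m] with y hy01 hy
    rw [unitMeasure_stepFun_lt_and_le_add hα (fun k => hr _) hy01 hy (hr i) hri hqα, div_eq_mul_inv]
  have hα' : ENNReal.ofReal α ≠ 0 := (ENNReal.ofReal_pos.2 hα).ne'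
  rw [pivotEvent_succ_eq_preimage, cubeMeasure_succ_preimage i hS]
  simp only [Set.mem_ofPred_eq]
  rw [lintegral_congr_ae hslice,
    lintegral_mul_const' _ _ (ENNReal.inv_ne_top.2 hα'), ← div_eq_mul_inv,
    ENNReal.mul_div_cancel hα' ENNReal.ofReal_ne_top, lintegral_volume_diff_jumps]

lemma mul_minerValue_succ (hα : 0 < α) {r : Fin (m + 1) → ℝ} (hr : ∀ j, 0 ≤ r j) {q : ℝ}
    {i : Fin (m + 1)} (hri : r i ≤ q) (hqα : q ≤ α)
    (hconst : ∀ u ∈ Set.Ioc (q - r i) q, oceanicValue m u α (fun k => r (i.succAbove k)) =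
      oceanicValue m q α (fun k => r (i.succAbove k))) :
    α * minerValue (m + 1) q α r i = r i * oceanicValue m q α (fun k => r (i.succAbove k)) := by
  have hs : ∀ k, 0 ≤ r (i.succAbove k) := fun k => hr _
  have hcompl : ∀ u ∈ Set.Ioc (q - r i) q,
      cubeMeasure m (⋃ k, pivotEvent m u α (fun k => r (i.succAbove k)) k)ᶜ =
        cubeMeasure m (⋃ k, pivotEvent m q α (fun k => r (i.succAbove k)) k)ᶜ := fun u hu => by
    have := hconst u hu
    rwa [oceanicValue_eq_toReal hα.le hs, oceanicValue_eq_toReal hα.le hs,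
      ENNReal.toReal_eq_toReal_iff' (measure_ne_top _ _) (measure_ne_top _ _)] at this
  have h := congrArg ENNReal.toReal (ofReal_mul_cubeMeasure_pivotEvent_succ hα hr hri hqα)
  rw [setLIntegral_congr_fun measurableSet_Ioc hcompl, setLIntegral_const, Real.volume_Ioc,
    sub_sub_cancel, ENNReal.toReal_mul, ENNReal.toReal_mul, ENNReal.toReal_ofReal hα.le,
    ENNReal.toReal_ofReal (hr i), ← oceanicValue_eq_toReal hα.le hs] at h
  rw [minerValue, h, mul_comm]

theorem oceanicValue_eq_of_mem_Icc (hα : 0 < α) :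
    ∀ {m : ℕ} {s : Fin m → ℝ}, (∀ k, 0 ≤ s k) → ∀ {u v : ℝ}, u ∈ Set.Icc (∑ k, s k) α →
      v ∈ Set.Icc (∑ k, s k) α → oceanicValue m u α s = oceanicValue m v α s
  | 0, _, _, _, _, _, _ => by simp [oceanicValue]
  | m + 1, s, hs, u, v, hu, hv => by
    refine congrArg (1 - ·) (sum_congr rfl fun k _ => mul_left_cancel₀ hα.ne' ?_)
    have hsplit := Fin.sum_univ_succAbove s k
    have hs' : ∀ j, 0 ≤ s (k.succAbove j) := fun j => hs _
    have hsk := hs k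
    have hφ : ∀ w ∈ Set.Icc (∑ k, s k) α, α * minerValue (m + 1) w α s k =
        s k * oceanicValue m v α fun j => s (k.succAbove j) := fun w hw => by
      have hsum' : ∑ j, s (k.succAbove j) ≤ w - s k := by linarith [hw.1]
      rw [mul_minerValue_succ hα hs (by linarith [sum_nonneg fun j (_ : j ∈ univ) => hs' j])
          hw.2 fun u hu => oceanicValue_eq_of_mem_Icc hα hs' ⟨by linarith [hu.1], hu.2.trans hw.2⟩
            ⟨by linarith, hw.2⟩,
        oceanicValue_eq_of_mem_Icc hα hs' ⟨by linarith, hw.2⟩ ⟨by linarith [hv.1], hv.2⟩]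
    rw [hφ u hu, hφ v hv]

end OceanicGame

/-- Entry theorem for an arbitrary quota `q > 0`: the value per unit of resource of a newly
entering miner in `Γ⁺` equals the oceanic value per unit of resource in `Γ`. -/
theorem stmt_2 (m : ℕ) (q α : ℝ) (r : Fin m → ℝ) (w : ℝ) (hq : 0 < q)
    (hr : ∀ j, 0 ≤ r j) (hα : q ≤ α) (hw : 0 < w) (hsum : (∑ j, r j) + w ≤ q) :
    minerValue (m + 1) q α (Fin.snoc r w) (Fin.last m) / w =
      oceanicValue m q α r / α := by
  have hα₀ : 0 < α := hq.trans_le hα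
  have hr' : ∀ j, 0 ≤ (Fin.snoc r w : Fin (m + 1) → ℝ) j :=
    Fin.lastCases (by simpa using hw.le) fun j => by simpa using hr j
  have hconst : ∀ u ∈ Set.Ioc (q - w) q, oceanicValue m u α r = oceanicValue m q α r :=
    fun u hu => OceanicGame.oceanicValue_eq_of_mem_Icc hα₀ hr
      ⟨by linarith [hu.1], hu.2.trans hα⟩ ⟨by linarith [hw], hα⟩
  have hvalue := OceanicGame.mul_minerValue_succ hα₀ hr' (i := Fin.last m)
    (by simpa using (le_add_of_nonneg_left (sum_nonneg fun j _ => hr j)).trans hsum) hα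
    (by simpa using hconst)
  simp only [Fin.snoc_last, Fin.succAbove_last, Fin.snoc_castSucc] at hvalue
  rw [div_eq_div_iff hw.ne' hα₀.ne']
  linarith
end

section
/- Let q > 0, let r_1,…,r_m ≥ 0 and α > 0, and let X_1,…,X_m be independent uniform random variables on [0,1]. For each i let A_i be the event { r(X_i) + α·X_i < q ≤ r(X_i) + α·X_i + r_i }, where r(x) := Σ_{j=1}^m r_j·1{X_j < x}. Then for all i ≠ j the events A_i and A_j intersect in a set of probability zero; consequently Σ_{i=1}^m φ_i ≤ 1, i.e., the oceanic value Φ := 1 − Σ_{i=1}^m φ_i is nonnegative. -/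
open MeasureTheory Finset
open scoped ENNReal

instance : IsProbabilityMeasure (volume.restrict (Set.Icc (0:ℝ) 1)) :=
  ⟨by simp⟩

instance inst_s3 (m : ℕ) : IsProbabilityMeasure (cubeMeasure m) := by
  unfold cubeMeasure; infer_instance

lemma diag_null (m : ℕ) (i j : Fin m) (hij : i ≠ j) :
    cubeMeasure m {x | x i = x j} = 0 := by
  cases m with
  | zero => exact absurd (Fin.pos i) (by simp)
  | succ n =>
    obtain ⟨k, hk⟩ := Fin.exists_succAbove_eq (Ne.symm hij)
    have hmp := MeasureTheory.measurePreserving_piFinSuccAbove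
      (fun _ : Fin (n+1) => volume.restrict (Set.Icc (0:ℝ) 1)) i
    set e := MeasurableEquiv.piFinSuccAbove (fun _ : Fin (n+1) => ℝ) i
    have hS : MeasurableSet {p : ℝ × (Fin n → ℝ) | p.1 = p.2 k} :=
      measurableSet_eq_fun measurable_fst ((measurable_pi_apply k).comp measurable_snd)
    have hpre : {x : Fin (n+1) → ℝ | x i = x j}
        = e ⁻¹' {p : ℝ × (Fin n → ℝ) | p.1 = p.2 k} := by
      ext x
      simp only [e, MeasurableEquiv.piFinSuccAbove, MeasurableEquiv.coe_mk,
        Fin.insertNthEquiv, Equiv.coe_fn_symm_mk, Set.mem_preimage, Set.mem_setOf_eq,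
        Fin.removeNth, hk]
    rw [show cubeMeasure (n+1) = Measure.pi fun _ => volume.restrict (Set.Icc (0:ℝ) 1) from rfl,
      hpre, hmp.measure_preimage hS.nullMeasurableSet]
    rw [Measure.measure_prod_null hS]
    filter_upwards with a
    have : (Prod.mk a ⁻¹' {p : ℝ × (Fin n → ℝ) | p.1 = p.2 k}) = {y : Fin n → ℝ | y k = a} := by
      ext y; simp [eq_comm]
    rw [this]
    exact Measure.pi_hyperplane (fun _ : Fin n => volume.restrict (Set.Icc (0:ℝ) 1)) k a

lemma pivot_measurable (m : ℕ) (q α : ℝ) (r : Fin m → ℝ) (i : Fin m) :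
    MeasurableSet (pivotEvent m q α r i) := by
  have hf : Measurable fun x : Fin m → ℝ =>
      (∑ j, if x j < x i then r j else 0) + α * x i := by
    apply Measurable.add
    · apply Finset.measurable_sum
      intro j _
      exact Measurable.ite (measurableSet_lt (measurable_pi_apply j) (measurable_pi_apply i))
        measurable_const measurable_const
    · exact measurable_const.mul (measurable_pi_apply i)
  exact (measurableSet_lt hf measurable_const).inter
    (measurableSet_le measurable_const (hf.add measurable_const))

lemma pivot_inter_subset_diag (m : ℕ) (q α : ℝ) (r : Fin m → ℝ)
    (hr : ∀ j, 0 ≤ r j) (hα : 0 < α) (i j : Fin m) :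
    pivotEvent m q α r i ∩ pivotEvent m q α r j ⊆ {x | x i = x j} := by
  rintro x ⟨hi, hj⟩
  by_contra hne
  -- key claim: if x b < x a then we get a contradiction from events a and b
  have key : ∀ a b : Fin m, x b < x a →
      (∑ k, if x k < x b then r k else 0) + α * x b < q →
      q ≤ (∑ k, if x k < x b then r k else 0) + α * x b + r b →
      (∑ k, if x k < x a then r k else 0) + α * x a < q → False := by
    intro a b hba _ hbq haq
    have hsum : (∑ k, if x k < x b then r k else 0) + r b
        ≤ ∑ k, if x k < x a then r k else 0 := by
      have : (∑ k, if x k < x b then r k else 0) + r b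
          = ∑ k, ((if x k < x b then r k else 0) + if k = b then r b else 0) := by
        rw [Finset.sum_add_distrib, Finset.sum_ite_eq' Finset.univ b (fun _ => r b)]
        simp
      rw [this]
      apply Finset.sum_le_sum
      intro k _
      by_cases hkb : k = b
      · subst hkb
        simp [lt_irrefl, hba]
      · simp only [hkb, if_false, add_zero]
        by_cases hk : x k < x b
        · rw [if_pos hk, if_pos (hk.trans hba)]
        · rw [if_neg hk]
          split
          · exact hr k
          · exact le_rfl
    have hmul : α * x b < α * x a := by
      exact mul_lt_mul_of_pos_left hba hα
    linarith
  rcases lt_or_gt_of_ne hne with h | h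
  · exact key j i h hi.1 hi.2 hj.1
  · exact key i j h hj.1 hj.2 hi.1

/-- Distinct pivot events intersect in a null set; consequently `∑_i φ_i ≤ 1`,
i.e. the oceanic value `Φ = 1 - ∑_i φ_i` is nonnegative. -/
theorem stmt_3 (m : ℕ) (q α : ℝ) (r : Fin m → ℝ) (hq : 0 < q)
    (hr : ∀ j, 0 ≤ r j) (hα : 0 < α) :
    (∀ i j : Fin m, i ≠ j →
      cubeMeasure m (pivotEvent m q α r i ∩ pivotEvent m q α r j) = 0) ∧
    (∑ i, minerValue m q α r i ≤ 1) ∧ 0 ≤ oceanicValue m q α r := by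
  have hnull : ∀ i j : Fin m, i ≠ j →
      cubeMeasure m (pivotEvent m q α r i ∩ pivotEvent m q α r j) = 0 := by
    intro i j hij
    exact measure_mono_null (pivot_inter_subset_diag m q α r hr hα i j)
      (diag_null m i j hij)
  have hsum : ∑ i, minerValue m q α r i ≤ 1 := by
    have hunion : (∑ i, cubeMeasure m (pivotEvent m q α r i))
        = cubeMeasure m (⋃ i ∈ Finset.univ, pivotEvent m q α r i) := by
      rw [measure_biUnion_finset₀]
      · intro i _ j _ hij
        exact hnull i j hij
      · intro i _
        exact (pivot_measurable m q α r i).nullMeasurableSet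
    have hle : (∑ i, cubeMeasure m (pivotEvent m q α r i)) ≤ 1 := by
      rw [hunion]
      exact (measure_mono (Set.subset_univ _)).trans_eq (measure_univ)
    have hfin : ∀ i : Fin m, cubeMeasure m (pivotEvent m q α r i) ≠ ⊤ :=
      fun i => (measure_lt_top _ _).ne
    have : ∑ i, minerValue m q α r i
        = (∑ i, cubeMeasure m (pivotEvent m q α r i)).toReal := by
      rw [ENNReal.toReal_sum (fun i _ => hfin i)]
      rfl
    rw [this]
    calc (∑ i, cubeMeasure m (pivotEvent m q α r i)).toReal
        ≤ (1 : ℝ≥0∞).toReal := ENNReal.toReal_mono (by simp) hle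
      _ = 1 := by simp
  exact ⟨hnull, hsum, by unfold oceanicValue; linarith⟩
end

section
/- Let Γ = [1/2; r_1, r_2; α] be a blockchain oceanic game with two major miners, where r_1, r_2 ≥ 0, α > 0, r_1 + r_2 + α = 1 and r_1 + r_2 ≤ 1/2 (region Δ_1, in which the ocean holds the majority of resources). Then the value of miner 1 is φ_1 = r_1·(α − r_2)/α². -/
open MeasureTheory Finset

/-!
Condition on `X₁ = a`. With probability `a` the other miner comes first (`X₂ < a`)
and miner 1 is pivotal iff `a ∈ [(1/2 - r₁ - r₂)/α, (1/2 - r₂)/α)`; with probability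
`1 - a` it comes later and miner 1 is pivotal iff `a ∈ [(1/2 - r₁)/α, 1/(2α))`.
In `Δ₁` we have `α ≥ 1/2`, so both intervals lie in `[0, 1]`, and
`φ₁ = ∫ a da + ∫ (1 - a) da` over them, which is `r₁ (α - r₂) / α²`.
-/

open Set

lemma prod_setOf_fst_mem_and_eq_setLIntegral {α β : Type*} [MeasurableSpace α]
    [MeasurableSpace β] {ν : Measure α} {μ : Measure β} [SFinite ν] [SFinite μ] (s : Set α)
    {P : α × β → Prop} (hP : MeasurableSet {p | P p}) :
    ν.prod μ {p | p.1 ∈ s ∧ P p} = ∫⁻ a in s, μ {b | P (a, b)} ∂ν := by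
  calc ν.prod μ {p | p.1 ∈ s ∧ P p} = (ν.restrict s).prod μ {p | P p} := by
        rw [Measure.restrict_prod_eq_prod_univ, Measure.restrict_apply hP]
        congr 1
        ext p
        simp [and_comm]
    _ = _ := Measure.prod_apply hP

lemma restrict_Icc_zero_one_Iio {a : ℝ} (ha : a ∈ Icc (0 : ℝ) 1) :
    volume.restrict (Icc (0 : ℝ) 1) (Iio a) = ENNReal.ofReal a := by
  have h : Iio a ∩ Icc 0 1 = Ico 0 a := by
    ext x
    simp only [Set.mem_inter_iff, Set.mem_Iio, Set.mem_Icc, Set.mem_Ico]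
    grind
  rw [Measure.restrict_apply measurableSet_Iio, h, Real.volume_Ico, sub_zero]

lemma restrict_Icc_zero_one_Ici {a : ℝ} (ha : a ∈ Icc (0 : ℝ) 1) :
    volume.restrict (Icc (0 : ℝ) 1) (Ici a) = ENNReal.ofReal (1 - a) := by
  have h : Ici a ∩ Icc 0 1 = Icc a 1 := by
    ext x
    simp only [Set.mem_inter_iff, Set.mem_Ici, Set.mem_Icc]
    grind
  rw [Measure.restrict_apply measurableSet_Ici, h, Real.volume_Icc]

lemma setLIntegral_Ico_ofReal {f : ℝ → ℝ} {u v : ℝ} (hf : Continuous f) (huv : u ≤ v)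
    (hf₀ : ∀ x ∈ Ico u v, 0 ≤ f x) :
    ∫⁻ x in Ico u v, ENNReal.ofReal (f x) = ENNReal.ofReal (∫ x in u..v, f x) := by
  rw [intervalIntegral.integral_of_le huv, ← integral_Ico_eq_integral_Ioc,
    ofReal_integral_eq_lintegral_ofReal (hf.integrableOn_Icc.mono_set Ico_subset_Icc_self)
      ((ae_restrict_iff' measurableSet_Ico).2 (Filter.Eventually.of_forall hf₀))]

lemma unitSquare_measureReal_snd_lt_fst {u v : ℝ} (hu : 0 ≤ u) (huv : u ≤ v) (hv : v ≤ 1) :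
    ((volume.restrict (Icc (0 : ℝ) 1)).prod (volume.restrict (Icc (0 : ℝ) 1))).real
      {p | p.1 ∈ Ico u v ∧ p.2 < p.1} = (v ^ 2 - u ^ 2) / 2 := by
  have hsub : Ico u v ⊆ Icc 0 1 := fun x hx => ⟨hu.trans hx.1, hx.2.le.trans hv⟩
  rw [measureReal_def, prod_setOf_fst_mem_and_eq_setLIntegral
    (P := fun p : ℝ × ℝ => p.2 < p.1) _ (measurableSet_lt measurable_snd measurable_fst)]
  simp only [Set.Iio_def]
  rw [Measure.restrict_restrict measurableSet_Ico, inter_eq_left.2 hsub,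
    setLIntegral_congr_fun measurableSet_Ico (fun a ha => restrict_Icc_zero_one_Iio (hsub ha)),
    setLIntegral_Ico_ofReal continuous_id' huv (fun x hx => hu.trans hx.1), integral_id,
    ENNReal.toReal_ofReal (by nlinarith)]

lemma unitSquare_measureReal_fst_le_snd {u v : ℝ} (hu : 0 ≤ u) (huv : u ≤ v) (hv : v ≤ 1) :
    ((volume.restrict (Icc (0 : ℝ) 1)).prod (volume.restrict (Icc (0 : ℝ) 1))).real
      {p | p.1 ∈ Ico u v ∧ p.1 ≤ p.2} = v - u - (v ^ 2 - u ^ 2) / 2 := by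
  have hsub : Ico u v ⊆ Icc 0 1 := fun x hx => ⟨hu.trans hx.1, hx.2.le.trans hv⟩
  rw [measureReal_def, prod_setOf_fst_mem_and_eq_setLIntegral
    (P := fun p : ℝ × ℝ => p.1 ≤ p.2) _ (measurableSet_le measurable_fst measurable_snd)]
  simp only [Set.Ici_def]
  rw [Measure.restrict_restrict measurableSet_Ico, inter_eq_left.2 hsub,
    setLIntegral_congr_fun measurableSet_Ico (fun a ha => restrict_Icc_zero_one_Ici (hsub ha)),
    setLIntegral_Ico_ofReal (f := fun x => 1 - x) (by fun_prop) huv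
      (fun x hx => sub_nonneg.2 (hx.2.le.trans hv)),
    intervalIntegral.integral_sub intervalIntegrable_const intervalIntegral.intervalIntegrable_id,
    integral_id, intervalIntegral.integral_const, smul_eq_mul, mul_one,
    ENNReal.toReal_ofReal (by nlinarith)]

lemma lt_and_le_add_iff_mem_Ico_div {α q r s x : ℝ} (hα : 0 < α) :
    s + α * x < q ∧ q ≤ s + α * x + r ↔ x ∈ Ico ((q - s - r) / α) ((q - s) / α) := by
  rw [Set.mem_Ico, div_le_iff₀ hα, lt_div_iff₀ hα]
  constructor <;> rintro ⟨h₁, h₂⟩ <;> constructor <;> linarith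

lemma pivotEvent_two_zero {q α r₁ r₂ : ℝ} (hα : 0 < α) :
    pivotEvent 2 q α ![r₁, r₂] 0 = MeasurableEquiv.finTwoArrow ⁻¹'
      ({p | p.1 ∈ Ico ((q - r₂ - r₁) / α) ((q - r₂) / α) ∧ p.2 < p.1} ∪
        {p | p.1 ∈ Ico ((q - r₁) / α) (q / α) ∧ p.1 ≤ p.2}) := by
  ext x
  by_cases hx : x 1 < x 0
  · simp [pivotEvent, Fin.sum_univ_two, hx, lt_and_le_add_iff_mem_Ico_div hα]
  · simpa [pivotEvent, Fin.sum_univ_two, hx, not_lt.1 hx] using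
      lt_and_le_add_iff_mem_Ico_div (s := 0) hα

lemma measurePreserving_cubeMeasure_two :
    MeasurePreserving MeasurableEquiv.finTwoArrow (cubeMeasure 2)
      ((volume.restrict (Icc (0 : ℝ) 1)).prod (volume.restrict (Icc (0 : ℝ) 1))) :=
  measurePreserving_finTwoArrow _

theorem stmt_5 (α r₁ r₂ : ℝ) (hr₁ : 0 ≤ r₁) (hr₂ : 0 ≤ r₂) (hα : 0 < α)
    (htot : r₁ + r₂ + α = 1) (hΔ₁ : r₁ + r₂ ≤ 1 / 2) :
    minerValue 2 (1 / 2) α ![r₁, r₂] 0 = r₁ * (α - r₂) / α ^ 2 := by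
  have hdiv_le : ∀ {a b : ℝ}, a ≤ b → a / α ≤ b / α := fun h =>
    div_le_div_of_nonneg_right h hα.le
  have hdiv_le_one : ∀ {a : ℝ}, a ≤ α → a / α ≤ 1 := fun h => (div_le_one hα).2 h
  have hdisj : Disjoint
      {p : ℝ × ℝ | p.1 ∈ Ico ((1 / 2 - r₂ - r₁) / α) ((1 / 2 - r₂) / α) ∧ p.2 < p.1}
      {p | p.1 ∈ Ico ((1 / 2 - r₁) / α) (1 / 2 / α) ∧ p.1 ≤ p.2} :=
    Set.disjoint_left.2 fun _ h h' => h.2.not_ge h'.2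
  rw [minerValue, ← measureReal_def, pivotEvent_two_zero hα,
    measurePreserving_cubeMeasure_two.measureReal_preimage (by measurability),
    measureReal_union hdisj (by measurability),
    unitSquare_measureReal_snd_lt_fst (div_nonneg (by linarith) hα.le) (hdiv_le (by linarith))
      (hdiv_le_one (by linarith)),
    unitSquare_measureReal_fst_le_snd (div_nonneg (by linarith) hα.le) (hdiv_le (by linarith))
      (hdiv_le_one (by linarith))]
  field_simp
  ring
end

section
/- (Crystallization out of the ocean.) Let 0 < r < 1/2 and consider the blockchain oceanic game Γ⁺ = [1/2; r; 1 − r] in which a single entity crystallizes a fraction r of the total (normalized) resources out of the ocean. Then the crystallized entity's value per unit of resource is v_1 = φ_1/r = 1/(1 − r), the oceanic value per unit of resource is v_oc = Φ/(1 − r) = (1 − 2r)/(1 − r)², and v_1 > v_oc. In particular, the coalition's per-unit value strictly exceeds the oceanic per-unit value for every positive fraction r of crystallized resources. -/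
open MeasureTheory Finset

theorem cubeMeasure_one_preimage_eval {s : Set ℝ} (hs : MeasurableSet s) :
    cubeMeasure 1 ((fun x => x 0) ⁻¹' s) = volume (s ∩ Set.Icc 0 1) := by
  rw [cubeMeasure, ← Measure.restrict_apply hs]
  exact (measurePreserving_funUnique _ (Fin 1)).measure_preimage hs.nullMeasurableSet

theorem pivotEvent_one {q α : ℝ} (hα : 0 < α) (r : Fin 1 → ℝ) :
    pivotEvent 1 q α r 0 = (fun x => x 0) ⁻¹' Set.Ico ((q - r 0) / α) (q / α) := by
  ext x
  simp only [pivotEvent, Fin.sum_univ_one, lt_irrefl, if_false, zero_add, Set.mem_ofPred_eq,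
    Set.mem_preimage, Set.mem_Ico, div_le_iff₀ hα, lt_div_iff₀ hα]
  constructor <;> rintro ⟨h₁, h₂⟩ <;> constructor <;> linarith

theorem minerValue_one {q α : ℝ} {r : Fin 1 → ℝ} (hα : 0 < α) (hr : 0 ≤ r 0) (hrq : r 0 ≤ q)
    (hqα : q ≤ α) : minerValue 1 q α r 0 = r 0 / α := by
  have hwindow : Set.Ico ((q - r 0) / α) (q / α) ⊆ Set.Icc 0 1 := fun x hx =>
    ⟨(div_nonneg (by linarith) hα.le).trans hx.1, hx.2.le.trans ((div_le_one hα).2 hqα)⟩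
  rw [minerValue, pivotEvent_one hα, cubeMeasure_one_preimage_eval measurableSet_Ico,
    Set.inter_eq_self_of_subset_left hwindow, Real.volume_Ico, ← sub_div, sub_sub_cancel,
    ENNReal.toReal_ofReal (div_nonneg hr hα.le)]

theorem oceanicValue_one {q α : ℝ} {r : Fin 1 → ℝ} (hα : 0 < α) (hr : 0 ≤ r 0) (hrq : r 0 ≤ q)
    (hqα : q ≤ α) : oceanicValue 1 q α r = 1 - r 0 / α := by
  rw [oceanicValue, Fin.sum_univ_one, minerValue_one hα hr hrq hqα]

/-- Crystallization out of the ocean: in `Γ⁺ = [1/2; r; 1-r]` with `0 < r < 1/2`,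
the crystallized entity's per-unit value is `1/(1-r)`, the oceanic per-unit value is
`(1-2r)/(1-r)²`, and the former strictly exceeds the latter. -/
theorem stmt_9 (r : ℝ) (hr : 0 < r) (hr' : r < 1 / 2) :
    minerValue 1 (1 / 2) (1 - r) (fun _ => r) 0 / r = 1 / (1 - r) ∧
    oceanicValue 1 (1 / 2) (1 - r) (fun _ => r) / (1 - r) = (1 - 2 * r) / (1 - r) ^ 2 ∧
    oceanicValue 1 (1 / 2) (1 - r) (fun _ => r) / (1 - r) <
      minerValue 1 (1 / 2) (1 - r) (fun _ => r) 0 / r := by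
  have hr₁ : 0 < 1 - r := by linarith
  have hφ : minerValue 1 (1 / 2) (1 - r) (fun _ => r) 0 = r / (1 - r) :=
    minerValue_one hr₁ hr.le hr'.le (by linarith)
  have hΦ : oceanicValue 1 (1 / 2) (1 - r) (fun _ => r) = 1 - r / (1 - r) :=
    oceanicValue_one hr₁ hr.le hr'.le (by linarith)
  have hv₁ : r / (1 - r) / r = 1 / (1 - r) := by field_simp
  have hv_oc : (1 - r / (1 - r)) / (1 - r) = (1 - 2 * r) / (1 - r) ^ 2 := by field_simp; ring
  refine ⟨by rw [hφ, hv₁], by rw [hΦ, hv_oc], ?_⟩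
  rw [hφ, hΦ, hv₁, hv_oc, div_lt_div_iff₀ (by positivity) hr₁]
  nlinarith
end

section
/- (The gain from crystallization grows with the crystallized fraction.) For 0 < r < 1/2, in the blockchain oceanic game Γ⁺ = [1/2; r; 1 − r], the difference between the crystallized entity's value per unit of resource and the oceanic value per unit of resource equals v_1 − v_oc = r/(1 − r)², and the function r ↦ r/(1 − r)² is strictly increasing on the interval (0, 1/2). -/
open MeasureTheory Finset

lemma minerValue_one_s10 (r : ℝ) (h0 : 0 < r) (h2 : r < 1/2) :
    minerValue 1 (1/2) (1 - r) (fun _ => r) 0 = r / (1 - r) := by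
  have hr1 : (0:ℝ) < 1 - r := by linarith
  have hset : pivotEvent 1 (1/2) (1 - r) (fun _ => r) 0 =
      Set.univ.pi fun _ : Fin 1 => Set.Ico ((1/2 - r)/(1-r)) ((1/2)/(1-r)) := by
    ext x
    simp only [pivotEvent, Set.mem_setOf_eq, Fin.sum_univ_one, lt_irrefl, if_false,
      Set.mem_pi, Set.mem_univ, forall_true_left, Fin.forall_fin_one, Set.mem_Ico,
      zero_add]
    constructor
    · rintro ⟨h1, h2'⟩
      constructor
      · rw [div_le_iff₀ hr1]; linarith
      · rw [lt_div_iff₀ hr1]; linarith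
    · rintro ⟨h1, h2'⟩
      rw [div_le_iff₀ hr1] at h1
      rw [lt_div_iff₀ hr1] at h2'
      constructor <;> linarith
  have hsub : Set.Ico ((1/2 - r)/(1-r)) ((1/2)/(1-r)) ⊆ Set.Icc (0:ℝ) 1 := by
    intro y hy
    obtain ⟨hy1, hy2⟩ := hy
    constructor
    · have : (0:ℝ) ≤ (1/2 - r)/(1-r) := by
        apply div_nonneg <;> linarith
      linarith
    · have : (1/2:ℝ)/(1-r) ≤ 1 := by rw [div_le_one hr1]; linarith
      linarith
  rw [minerValue, hset, cubeMeasure, Measure.pi_pi]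
  rw [Finset.prod_const, Finset.card_univ, Fintype.card_fin, pow_one]
  rw [Measure.restrict_apply measurableSet_Ico, Set.inter_eq_left.mpr hsub,
    Real.volume_Ico]
  rw [ENNReal.toReal_ofReal (by
    rw [sub_nonneg]; gcongr <;> linarith)]
  field_simp
  ring

/-- The gain from crystallization: in `Γ⁺ = [1/2; r; 1-r]` with `0 < r < 1/2`,
`v₁ - v_oc = r/(1-r)²`, and `r ↦ r/(1-r)²` is strictly increasing on `(0, 1/2)`. -/
theorem stmt_10 :
    (∀ r : ℝ, 0 < r → r < 1 / 2 →
      minerValue 1 (1 / 2) (1 - r) (fun _ => r) 0 / r -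
        oceanicValue 1 (1 / 2) (1 - r) (fun _ => r) / (1 - r) = r / (1 - r) ^ 2) ∧
    StrictMonoOn (fun r : ℝ => r / (1 - r) ^ 2) (Set.Ioo 0 (1 / 2)) := by
  constructor
  · intro r h0 h2
    have hr1 : (0:ℝ) < 1 - r := by linarith
    rw [oceanicValue, Fin.sum_univ_one, minerValue_one_s10 r h0 h2]
    field_simp
    ring
  · intro x hx y hy hxy
    obtain ⟨hx0, hx2⟩ := hx
    obtain ⟨hy0, hy2⟩ := hy
    have hx1 : (0:ℝ) < (1 - x)^2 := by nlinarith
    have hy1 : (0:ℝ) < (1 - y)^2 := by nlinarith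
    simp only
    rw [div_lt_div_iff₀ hx1 hy1]
    nlinarith [mul_pos (sub_pos.mpr hxy) (show (0:ℝ) < 1 - x*y by nlinarith)]
end
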